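/- arXiv:1310.6466 — 9 statements merged into one kernel-verified Lean document; each statement's English description precedes it below -/
import Mathlib

section
/- For any positive integers r, n and natural numbers a_i ≤ b_i (1 ≤ i ≤ n), there exist pairwise disjoint finite sets C_1, ..., C_n ⊆ ℕ such that for every r-coloring of the family of sets of the form A_1 ∪ ... ∪ A_n with A_i ⊆ C_i and |A_i| = a_i, there exist B_i ⊆ C_i with |B_i| = b_i such that the coloring is constant on all unions A_1 ∪ ... ∪ A_n with A_i ⊆ B_i and |A_i| = a_i. -/
/-!
Induct on `n`. Given disjoint `C₁, …, Cₙ₋₁` that work for the first `n - 1` coordinates, let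
`D` be their union and take `Cₙ` disjoint from `D` and large enough for the finite Ramsey theorem
for `aₙ`-subsets, coloured by the functions `𝒫(D) → Fin r`, `t ↦ (U ↦ χ (U ∪ t))`. On the
resulting homogeneous `Bₙ ⊆ Cₙ` the colour `χ (U ∪ Aₙ)` does not depend on `Aₙ`, and the induction
hypothesis applies to the induced colouring of `U`. The finite Ramsey theorem follows from the
infinite one by compactness: an ultrafilter limit of counterexamples would colour `ℕ` without an
infinite homogeneous set. The infinite theorem is proved by induction on `k`: choose
`x₀ < x₁ < ⋯` such that the colour of a `(k + 1)`-set of the `xⱼ` depends only on its least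
element, then pigeonhole the colours attached to the `xⱼ`.
-/

open Finset Function

theorem Fin.biUnion_univ_castSucc {α : Type*} [DecidableEq α] {n : ℕ}
    (A : Fin (n + 1) → Finset α) :
    univ.biUnion A = (univ.biUnion fun i : Fin n => A i.castSucc) ∪ A (Fin.last n) := by
  ext x
  simp [Fin.exists_fin_succ']

theorem Fin.pairwise_disjoint_snoc {α : Type*} {n : ℕ} {C : Fin n → Finset α} {s : Finset α}
    (hC : Pairwise (Disjoint on C)) (hs : ∀ i, Disjoint (C i) s) :
    Pairwise (Disjoint on (Fin.snoc C s : Fin (n + 1) → Finset α)) := by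
  intro i j hij
  induction i using Fin.lastCases <;> induction j using Fin.lastCases
  · exact absurd rfl hij
  · simpa [onFun] using (hs _).symm
  · simpa [onFun] using hs _
  · simpa [onFun] using hC (ne_of_apply_ne Fin.castSucc hij)

namespace Ramsey

variable {α β γ : Type*}

def IsHomogeneous (χ : Finset α → γ) (k : ℕ) (T : Set α) : Prop :=
  ∃ c, ∀ A : Finset α, ↑A ⊆ T → #A = k → χ A = c

theorem isHomogeneous_zero (χ : Finset α → γ) (T : Set α) : IsHomogeneous χ 0 T :=
  ⟨χ ∅, fun A _ hA => by rw [card_eq_zero.1 hA]⟩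

theorem IsHomogeneous.map {χ : Finset β → γ} {k : ℕ} {B : Finset α} (f : α ↪ β)
    (h : IsHomogeneous (fun A => χ (A.map f)) k B) : IsHomogeneous χ k (B.map f) := by
  obtain ⟨c, hc⟩ := h
  refine ⟨c, fun A hA hcard => ?_⟩
  obtain ⟨A', hA'B, rfl⟩ := subset_map_iff.1 (coe_subset.1 hA)
  exact hc A' (coe_subset.2 hA'B) (by rwa [card_map] at hcard)

theorem exists_strictMono_isHomogeneous_insert {k : ℕ}
    (hk : ∀ (χ : Finset ℕ → γ) {S : Set ℕ}, S.Infinite → ∃ T ⊆ S, T.Infinite ∧ IsHomogeneous χ k T)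
    (χ : Finset ℕ → γ) {S : Set ℕ} (hS : S.Infinite) :
    ∃ x : ℕ → ℕ, StrictMono x ∧ (∀ j, x j ∈ S) ∧
      ∀ j, IsHomogeneous (fun A => χ (insert (x j) A)) k (x '' Set.Ioi j) := by
  have step : ∀ S : {S : Set ℕ // S.Infinite}, ∃ T : {T : Set ℕ // T.Infinite},
      (T : Set ℕ) ⊆ {y ∈ S.1 | sInf S.1 < y} ∧
      IsHomogeneous (fun A => χ (insert (sInf S.1) A)) k T := by
    rintro ⟨S, hS⟩
    have hS' : {y ∈ S | sInf S < y}.Infinite :=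
      Set.Infinite.mono (fun y hy => ⟨hy.1, not_le.1 hy.2⟩) (hS.sdiff (Set.finite_Iic (sInf S)))
    obtain ⟨T, hTS, hT, hhom⟩ := hk (fun A => χ (insert (sInf S) A)) hS'
    exact ⟨⟨T, hT⟩, hTS, hhom⟩
  choose next hnext hhom using step
  let Sq : ℕ → {S : Set ℕ // S.Infinite} := fun j => next^[j] ⟨S, hS⟩
  have hSq_succ : ∀ j, Sq (j + 1) = next (Sq j) := fun j => iterate_succ_apply' _ _ _
  have hSq_anti : Antitone fun j => (Sq j : Set ℕ) :=
    antitone_nat_of_succ_le fun j => by rw [hSq_succ]; exact fun y hy => (hnext _ hy).1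
  have hmem : ∀ j, sInf (Sq j).1 ∈ (Sq j).1 := fun j => Nat.sInf_mem (Sq j).2.nonempty
  have hlater : ∀ j j', j < j' → sInf (Sq j').1 ∈ (next (Sq j)).1 := fun j j' hjj' =>
    hSq_succ j ▸ hSq_anti hjj' (hmem j')
  refine ⟨fun j => sInf (Sq j).1,
    strictMono_nat_of_lt_succ fun j => (hnext _ (hlater j _ j.lt_succ_self)).2,
    fun j => hSq_anti (Nat.zero_le j) (hmem j), fun j => ?_⟩
  obtain ⟨c, hc⟩ := hhom (Sq j)
  refine ⟨c, fun A hA hcard => hc A (fun a ha => ?_) hcard⟩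
  obtain ⟨j', hj', rfl⟩ := hA ha
  exact hlater j j' hj'

theorem exists_infinite_isHomogeneous [Finite γ] (k : ℕ) (χ : Finset ℕ → γ) {S : Set ℕ}
    (hS : S.Infinite) : ∃ T ⊆ S, T.Infinite ∧ IsHomogeneous χ k T := by
  induction k generalizing χ S with
  | zero => exact ⟨S, subset_rfl, hS, isHomogeneous_zero χ S⟩
  | succ k ih =>
    obtain ⟨x, hx, hxS, hhom⟩ := exists_strictMono_isHomogeneous_insert (fun χ _ hS => ih χ hS) χ hS
    choose c hc using hhom
    obtain ⟨c₀, hJ⟩ := Finite.exists_infinite_fiber c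
    refine ⟨x '' (c ⁻¹' {c₀}), Set.image_subset_iff.2 fun j _ => hxS j,
      (Set.infinite_coe_iff.1 hJ).image hx.injective.injOn, c₀, fun A hA hcard => ?_⟩
    have hne : A.Nonempty := card_pos.1 (by omega)
    obtain ⟨j, hj, hjmin⟩ := hA (A.min'_mem hne)
    have hjA : x j ∈ A := hjmin ▸ A.min'_mem hne
    have hrest : ↑(A.erase (x j)) ⊆ x '' Set.Ioi j := by
      intro a ha
      obtain ⟨ha_ne, haA⟩ := mem_erase.1 ha
      obtain ⟨j', -, rfl⟩ := hA haA
      exact ⟨j', hx.lt_iff_lt.1 (lt_of_le_of_ne (hjmin ▸ A.min'_le _ haA) (Ne.symm ha_ne)), rfl⟩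
    rw [← insert_erase hjA]
    exact (hc j _ hrest (by rw [card_erase_of_mem hjA, hcard]; rfl)).trans hj

theorem exists_isHomogeneous_subset_range [Finite γ] (k m : ℕ) :
    ∃ N, ∀ χ : Finset ℕ → γ, ∃ B ⊆ range N, #B = m ∧ IsHomogeneous χ k B := by
  by_contra! h
  choose χ hχ using h
  have hlim : ∀ A, ∃ c, ∀ᶠ N in Filter.hyperfilter ℕ, χ N A = c := fun A => by
    obtain ⟨c, hc⟩ := (Filter.hyperfilter ℕ |>.map fun N => χ N A).eq_pure_of_finite
    have hc' : ({c} : Set γ) ∈ (Filter.hyperfilter ℕ).map fun N => χ N A := by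
      rw [hc]
      exact Set.mem_singleton c
    exact ⟨c, Ultrafilter.mem_map.1 hc'⟩
  choose lim hlim using hlim
  obtain ⟨T, -, hT, c, hc⟩ := exists_infinite_isHomogeneous k lim Set.infinite_univ
  obtain ⟨M, hMT, hM⟩ := hT.exists_subset_card_eq m
  obtain ⟨N₀, hMN₀⟩ := M.exists_nat_subset_range
  obtain ⟨N, hN₀N, hagree⟩ : ∃ N, N₀ ≤ N ∧ ∀ A ∈ M.powersetCard k, χ N A = lim A :=
    (((Filter.eventually_ge_atTop N₀).filter_mono Nat.hyperfilter_le_atTop).and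
      ((Filter.eventually_all_finset _).2 fun A _ => hlim A)).exists
  refine hχ N M (hMN₀.trans (range_subset_range.2 hN₀N)) hM ⟨c, fun A hA hcard => ?_⟩
  rw [hagree A (mem_powersetCard.2 ⟨coe_subset.1 hA, hcard⟩)]
  exact hc A (hA.trans hMT) hcard

theorem exists_isHomogeneous_subset_map [Finite γ] (k m : ℕ) :
    ∃ N, ∀ (f : ℕ ↪ α) (χ : Finset α → γ), ∃ B ⊆ (range N).map f, #B = m ∧ IsHomogeneous χ k B := by
  obtain ⟨N, hN⟩ := exists_isHomogeneous_subset_range (γ := γ) k m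
  refine ⟨N, fun f χ => ?_⟩
  obtain ⟨B, hBN, hB, hhom⟩ := hN fun A => χ (A.map f)
  exact ⟨B.map f, map_subset_map.2 hBN, by rw [card_map, hB], hhom.map f⟩

variable [DecidableEq α] {n : ℕ}

def IsProductHomogeneous (χ : Finset α → γ) (a : Fin n → ℕ) (B : Fin n → Finset α) : Prop :=
  ∀ A A' : Fin n → Finset α, (∀ i, A i ⊆ B i ∧ #(A i) = a i) →
    (∀ i, A' i ⊆ B i ∧ #(A' i) = a i) → χ (univ.biUnion A) = χ (univ.biUnion A')

theorem IsProductHomogeneous.snoc {χ χ₀ : Finset α → γ} {a : Fin (n + 1) → ℕ}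
    {B : Fin n → Finset α} {s : Finset α}
    (h₀ : IsProductHomogeneous χ₀ (fun i => a i.castSucc) B)
    (hs : ∀ U ⊆ univ.biUnion B, ∀ t ⊆ s, #t = a (Fin.last n) → χ (U ∪ t) = χ₀ U) :
    IsProductHomogeneous χ a (Fin.snoc B s) := by
  intro A A' hA hA'
  simp only [Fin.forall_fin_succ', Fin.snoc_castSucc, Fin.snoc_last] at hA hA'
  rw [Fin.biUnion_univ_castSucc, Fin.biUnion_univ_castSucc,
    hs _ (biUnion_mono fun i _ => (hA.1 i).1) _ hA.2.1 hA.2.2,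
    hs _ (biUnion_mono fun i _ => (hA'.1 i).1) _ hA'.2.1 hA'.2.2, h₀ _ _ hA.1 hA'.1]

theorem exists_pairwise_disjoint_isProductHomogeneous [Finite γ] (n : ℕ) (a b : Fin n → ℕ) :
    ∃ C : Fin n → Finset ℕ, Pairwise (Disjoint on C) ∧ ∀ χ : Finset ℕ → γ,
      ∃ B : Fin n → Finset ℕ, (∀ i, B i ⊆ C i ∧ #(B i) = b i) ∧ IsProductHomogeneous χ a B := by
  induction n with
  | zero =>
    exact ⟨finZeroElim, fun i => i.elim0, fun χ =>
      ⟨finZeroElim, finZeroElim, fun A A' _ _ => by simp [univ_eq_empty]⟩⟩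
  | succ n ih =>
    obtain ⟨C, hC, hCB⟩ := ih (fun i => a i.castSucc) (fun i => b i.castSucc)
    set D := univ.biUnion C
    obtain ⟨N, hN⟩ := exists_isHomogeneous_subset_map (γ := D.powerset → γ)
      (a (Fin.last n)) (b (Fin.last n))
    let f : ℕ ↪ ℕ := (D.finite_toSet.infinite_compl.natEmbedding _).trans (Embedding.subtype _)
    have hf : ∀ i, Disjoint (C i) ((range N).map f) := fun i => disjoint_left.2 fun x hx hxf => by
      obtain ⟨y, -, rfl⟩ := mem_map.1 hxf
      exact (D.finite_toSet.infinite_compl.natEmbedding _ y).2 (mem_biUnion.2 ⟨i, mem_univ _, hx⟩)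
    refine ⟨Fin.snoc C ((range N).map f), Fin.pairwise_disjoint_snoc hC hf, fun χ => ?_⟩
    obtain ⟨s, hs, hs_card, g, hg⟩ := hN f fun t U => χ (↑U ∪ t)
    -- the value outside `D.powerset` is never used; `χ U` just saves assuming `Nonempty γ`
    obtain ⟨B, hB, hB_hom⟩ := hCB fun U => if hU : U ∈ D.powerset then g ⟨U, hU⟩ else χ U
    refine ⟨Fin.snoc B s, Fin.forall_fin_succ'.2 ⟨by simpa using hB, by simpa using ⟨hs, hs_card⟩⟩,
      hB_hom.snoc fun U hU t ht ht_card => ?_⟩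
    have hUD : U ∈ D.powerset := mem_powerset.2 (hU.trans (biUnion_mono fun i _ => (hB i).1))
    rw [dif_pos hUD]
    exact congrFun (hg t (coe_subset.2 ht) ht_card) ⟨U, hUD⟩

end Ramsey

theorem product_ramsey_general (r n : ℕ)
    (a b : Fin n → ℕ) :
    ∃ C : Fin n → Finset ℕ,
      (∀ i j, i ≠ j → Disjoint (C i) (C j)) ∧
      ∀ χ : Finset ℕ → Fin r,
        ∃ B : Fin n → Finset ℕ,
          (∀ i, B i ⊆ C i ∧ (B i).card = b i) ∧
          ∀ A A' : Fin n → Finset ℕ,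
            (∀ i, A i ⊆ B i ∧ (A i).card = a i) →
            (∀ i, A' i ⊆ B i ∧ (A' i).card = a i) →
            χ (Finset.univ.biUnion A) = χ (Finset.univ.biUnion A') := by
  obtain ⟨C, hC, hCB⟩ := Ramsey.exists_pairwise_disjoint_isProductHomogeneous (γ := Fin r) n a b
  exact ⟨C, fun i j hij => hC hij, hCB⟩

/-- Product Ramsey lemma (Lemma `blob`): for positive `r, n` and `aᵢ ≤ bᵢ`, there are
pairwise disjoint finite sets `C₁,…,Cₙ ⊆ ℕ` such that any `r`-coloring of unions
`A₁ ∪ … ∪ Aₙ` with `Aᵢ ⊆ Cᵢ`, `|Aᵢ| = aᵢ`, is constant on all such unions drawn from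
some `Bᵢ ⊆ Cᵢ` with `|Bᵢ| = bᵢ`. -/
theorem product_ramsey (r n : ℕ) (hr : 0 < r) (hn : 0 < n)
    (a b : Fin n → ℕ) (hab : ∀ i, a i ≤ b i) :
    ∃ C : Fin n → Finset ℕ,
      (∀ i j, i ≠ j → Disjoint (C i) (C j)) ∧
      ∀ χ : Finset ℕ → Fin r,
        ∃ B : Fin n → Finset ℕ,
          (∀ i, B i ⊆ C i ∧ (B i).card = b i) ∧
          ∀ A A' : Fin n → Finset ℕ,
            (∀ i, A i ⊆ B i ∧ (A i).card = a i) →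
            (∀ i, A' i ⊆ B i ∧ (A' i).card = a i) →
            χ (Finset.univ.biUnion A) = χ (Finset.univ.biUnion A') :=
  product_ramsey_general r n a b
end

section
/- For n = 2, the product Ramsey property holds: for all r ≥ 1 and a_1 ≤ b_1, a_2 ≤ b_2, there exist disjoint finite sets C_1, C_2 ⊆ ℕ such that every r-coloring of pairs (A_1, A_2) with A_i ⊆ C_i, |A_i| = a_i admits B_1 ⊆ C_1, B_2 ⊆ C_2 with |B_i| = b_i on which the coloring of such pairs (A_1, A_2) with A_i ⊆ B_i is constant. -/
/-!
The hypergraph Ramsey theorem is proved by induction on the uniformity `a`: on a large enough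
set one first builds an end-homogeneous set, on which the colour of an `(a + 1)`-set depends only
on its least element, and then the pigeonhole principle on those colours leaves a monochromatic
set. For the product version, colour each `a₁`-set `A₁ ⊆ C₁` by the whole function
`A₂ ↦ χ (A₁, A₂)` on the `a₂`-subsets of `C₂`: a set `B₁` monochromatic for this finite palette
makes `χ` independent of `A₁`, and Ramsey on `C₂` for the remaining colouring gives `B₂`.
-/

open Finset

variable {α β γ : Type*}

def IsMonochromatic (χ : Finset α → γ) (a : ℕ) (B : Finset α) (c : γ) : Prop :=
  ∀ A ⊆ B, #A = a → χ A = c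

theorem IsMonochromatic.mono {χ : Finset α → γ} {a : ℕ} {B B' : Finset α} {c : γ}
    (h : IsMonochromatic χ a B c) (hB : B' ⊆ B) : IsMonochromatic χ a B' c :=
  fun A hA => h A (hA.trans hB)

variable (α γ) in
def RamseyProperty (a : ℕ) : Prop :=
  ∀ b, ∃ n, ∀ S : Finset α, n ≤ #S → ∀ χ : Finset α → γ,
    ∃ B ⊆ S, #B = b ∧ ∃ c, IsMonochromatic χ a B c

theorem ramseyProperty_zero : RamseyProperty α γ 0 := by
  intro b
  refine ⟨b, fun S hS χ => ?_⟩
  obtain ⟨B, hBS, hB⟩ := exists_subset_card_eq hS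
  exact ⟨B, hBS, hB, χ ∅, fun A _ hA => by rw [card_eq_zero.mp hA]⟩

section LinearOrder

variable [LinearOrder α]

theorem exists_endHomogeneous {a : ℕ} (hR : RamseyProperty α γ a) (m : ℕ) :
    ∃ N, ∀ S : Finset α, N ≤ #S → ∀ χ : Finset α → γ, ∃ B ⊆ S, #B = m ∧
      ∃ f : α → γ, ∀ x ∈ B, IsMonochromatic (fun A => χ (insert x A)) a {y ∈ B | x < y} (f x) := by
  induction m with
  | zero => exact ⟨0, fun S _ χ => ⟨∅, empty_subset S, rfl, fun _ => χ ∅, by simp⟩⟩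
  | succ m ih =>
    obtain ⟨N, hN⟩ := ih
    obtain ⟨n, hn⟩ := hR N
    refine ⟨n + 1, fun S hS χ => ?_⟩
    have hSne : S.Nonempty := card_pos.mp (by omega)
    set x := S.min' hSne
    obtain ⟨T, hTS, hT, c, hc⟩ :=
      hn (S.erase x) (by rw [card_erase_of_mem (S.min'_mem hSne)]; omega) (fun A => χ (insert x A))
    obtain ⟨B, hBT, hB, f, hf⟩ := hN T hT.ge χ
    have hxB : ∀ y ∈ B, x < y := fun y hy => S.min'_lt_of_mem_erase_min' hSne (hTS (hBT hy))
    have hxB' : x ∉ B := fun h => lt_irrefl x (hxB x h)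
    refine ⟨insert x B, insert_subset (S.min'_mem hSne) (hBT.trans (hTS.trans (erase_subset _ _))),
      by rw [card_insert_of_notMem hxB', hB], Function.update f x c, ?_⟩
    intro y hy
    rcases mem_insert.mp hy with rfl | hyB
    · rw [Function.update_self, filter_insert, if_neg (lt_irrefl _)]
      exact hc.mono ((filter_subset _ _).trans hBT)
    · rw [Function.update_of_ne (ne_of_mem_of_not_mem hyB hxB'), filter_insert,
        if_neg (hxB y hyB).asymm]
      exact hf y hyB

theorem ramseyProperty_succ [Fintype γ] {a : ℕ} (hR : RamseyProperty α γ a) :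
    RamseyProperty α γ (a + 1) := by
  classical
  intro b
  obtain ⟨N, hN⟩ := exists_endHomogeneous hR (Fintype.card γ * (b - 1) + 1)
  refine ⟨N, fun S hS χ => ?_⟩
  obtain ⟨B, hBS, hB, f, hf⟩ := hN S hS χ
  obtain ⟨c, -, hc⟩ := exists_lt_card_fiber_of_mul_lt_card_of_maps_to
    (f := f) (s := B) (t := univ) (n := b - 1) (fun _ _ => mem_univ _) (by simp [hB])
  obtain ⟨B', hB'c, hB'⟩ := exists_subset_card_eq (s := {y ∈ B | f y = c}) (n := b) (by omega)
  have hB'B : B' ⊆ B := hB'c.trans (filter_subset _ _)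
  refine ⟨B', hB'B.trans hBS, hB', c, fun A hA hAcard => ?_⟩
  -- the colour of `A` is that of its least element `x`
  have hAne : A.Nonempty := card_pos.mp (by omega)
  set x := A.min' hAne
  have hxA : x ∈ A := A.min'_mem hAne
  have hfx : f x = c := (mem_filter.mp (hB'c (hA hxA))).2
  have hrest : A.erase x ⊆ {y ∈ B | x < y} := fun y hy =>
    mem_filter.mpr ⟨hB'B (hA (mem_of_mem_erase hy)), A.min'_lt_of_mem_erase_min' hAne hy⟩
  have := hf x (hB'B (hA hxA)) (A.erase x) hrest (by rw [card_erase_of_mem hxA, hAcard]; rfl)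
  simpa only [insert_erase hxA, hfx] using this

end LinearOrder

theorem ramseyProperty [LinearOrder α] [Fintype γ] (a : ℕ) : RamseyProperty α γ a := by
  induction a with
  | zero => exact ramseyProperty_zero
  | succ a ih => exact ramseyProperty_succ ih

theorem exists_monochromatic_prod [LinearOrder α] [LinearOrder β] [Fintype γ] (a₁ b₁ a₂ b₂ : ℕ) :
    ∃ n₂, ∀ S₂ : Finset β, n₂ ≤ #S₂ → ∃ n₁, ∀ S₁ : Finset α, n₁ ≤ #S₁ →
      ∀ χ : Finset α → Finset β → γ, ∃ B₁ ⊆ S₁, ∃ B₂ ⊆ S₂, #B₁ = b₁ ∧ #B₂ = b₂ ∧ ∃ c : γ,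
        ∀ A₁ ⊆ B₁, ∀ A₂ ⊆ B₂, #A₁ = a₁ → #A₂ = a₂ → χ A₁ A₂ = c := by
  obtain ⟨n₂, hn₂⟩ := ramseyProperty (α := β) (γ := γ) a₂ b₂
  refine ⟨n₂, fun S₂ hS₂ => ?_⟩
  obtain ⟨n₁, hn₁⟩ := ramseyProperty (α := α) (γ := S₂.powersetCard a₂ → γ) a₁ b₁
  refine ⟨n₁, fun S₁ hS₁ χ => ?_⟩
  obtain ⟨B₁, hB₁S, hB₁, c₁, hc₁⟩ := hn₁ S₁ hS₁ fun A₁ A₂ => χ A₁ A₂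
  obtain ⟨B₂, hB₂S, hB₂, c, hc⟩ := hn₂ S₂ hS₂ fun A₂ =>
    if h : A₂ ∈ S₂.powersetCard a₂ then c₁ ⟨A₂, h⟩ else χ ∅ ∅
  refine ⟨B₁, hB₁S, B₂, hB₂S, hB₁, hB₂, c, fun A₁ hA₁ A₂ hA₂ hA₁card hA₂card => ?_⟩
  have hmem : A₂ ∈ S₂.powersetCard a₂ := mem_powersetCard.mpr ⟨hA₂.trans hB₂S, hA₂card⟩
  calc χ A₁ A₂ = c₁ ⟨A₂, hmem⟩ := congrFun (hc₁ A₁ hA₁ hA₁card) ⟨A₂, hmem⟩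
    _ = c := by simpa [hmem] using hc A₂ hA₂ hA₂card

theorem product_ramsey_two_general (r a₁ b₁ a₂ b₂ : ℕ) :
    ∃ C₁ C₂ : Finset ℕ, Disjoint C₁ C₂ ∧
      ∀ χ : Finset ℕ × Finset ℕ → Fin r,
        ∃ B₁ B₂ : Finset ℕ, B₁ ⊆ C₁ ∧ B₂ ⊆ C₂ ∧ B₁.card = b₁ ∧ B₂.card = b₂ ∧
          ∀ A₁ A₂ A₁' A₂' : Finset ℕ,
            A₁ ⊆ B₁ → A₂ ⊆ B₂ → A₁' ⊆ B₁ → A₂' ⊆ B₂ →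
            A₁.card = a₁ → A₂.card = a₂ → A₁'.card = a₁ → A₂'.card = a₂ →
            χ (A₁, A₂) = χ (A₁', A₂') := by
  obtain ⟨n₂, hn₂⟩ := exists_monochromatic_prod (α := ℕ) (β := ℕ) (γ := Fin r) a₁ b₁ a₂ b₂
  obtain ⟨n₁, hn₁⟩ := hn₂ (Ico 0 n₂) (by simp)
  refine ⟨Ico n₂ (n₂ + n₁), Ico 0 n₂, (Ico_disjoint_Ico_consecutive 0 n₂ _).symm, fun χ => ?_⟩
  obtain ⟨B₁, hB₁, B₂, hB₂, hB₁card, hB₂card, c, hc⟩ :=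
    hn₁ (Ico n₂ (n₂ + n₁)) (by simp) fun A₁ A₂ => χ (A₁, A₂)
  refine ⟨B₁, B₂, hB₁, hB₂, hB₁card, hB₂card, fun A₁ A₂ A₁' A₂' h₁ h₂ h₁' h₂' k₁ k₂ k₁' k₂' => ?_⟩
  exact (hc A₁ h₁ A₂ h₂ k₁ k₂).trans (hc A₁' h₁' A₂' h₂' k₁' k₂').symm

/-- Product Ramsey lemma for `n = 2`: colorings of pairs `(A₁, A₂)` of subsets of
prescribed sizes from two disjoint ground sets can be made monochromatic on a product
of larger subsets. -/
theorem product_ramsey_two (r a₁ b₁ a₂ b₂ : ℕ) (hr : 1 ≤ r)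
    (h₁ : a₁ ≤ b₁) (h₂ : a₂ ≤ b₂) :
    ∃ C₁ C₂ : Finset ℕ, Disjoint C₁ C₂ ∧
      ∀ χ : Finset ℕ × Finset ℕ → Fin r,
        ∃ B₁ B₂ : Finset ℕ, B₁ ⊆ C₁ ∧ B₂ ⊆ C₂ ∧ B₁.card = b₁ ∧ B₂.card = b₂ ∧
          ∀ A₁ A₂ A₁' A₂' : Finset ℕ,
            A₁ ⊆ B₁ → A₂ ⊆ B₂ → A₁' ⊆ B₁ → A₂' ⊆ B₂ →
            A₁.card = a₁ → A₂.card = a₂ → A₁'.card = a₁ → A₂'.card = a₂ →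
            χ (A₁, A₂) = χ (A₁', A₂') :=
  product_ramsey_two_general r a₁ b₁ a₂ b₂
end

section
/- Let G be a finite directed graph (asymmetric irreflexive binary relation E) such that the non-edge relation ⊥ (defined by x ⊥ y iff x ≠ y, ¬E(x,y) and ¬E(y,x)) together with equality is an equivalence relation, and suppose G satisfies the parity constraint: for any two distinct ⊥-classes P, P', any distinct u, v ∈ P and distinct x, y ∈ P', the number of edges among the four pairs directed from {u,v} to {x,y} is even. Then for each ⊥-class P and each other class P', the relation u ∼_{P'} v defined on P by (for all x ∈ P', E(x,u) ↔ E(x,v)) is an equivalence relation on P with at most two classes. -/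
/-- The non-edge relation of a directed graph, extended by equality. -/
def dperp {V : Type*} (E : V → V → Prop) (x y : V) : Prop :=
  x = y ∨ (¬E x y ∧ ¬E y x)

/-! The parity constraint says that whether `u` and `v` are told apart by an in-neighbour
`x` does not depend on the choice of `x` in the other part. So on a part `P`, the relation
`∼_{P'}` is the kernel of the single predicate `E p'`, which takes only two values. -/

theorem iff_iff_iff_of_indicator_sum_even {a b c d : Prop}
    [Decidable a] [Decidable b] [Decidable c] [Decidable d]
    (h : ((if a then 1 else 0) + (if b then 1 else 0) +
      (if c then 1 else 0) + (if d then 1 else 0)) % 2 = 0) :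
    ((a ↔ b) ↔ (c ↔ d)) := by
  by_cases a <;> by_cases b <;> by_cases c <;> by_cases d <;> simp_all

theorem equivalence_forall_iff {V W : Type*} (S : W → Prop) (R : W → V → Prop) :
    Equivalence (fun u v : V => ∀ x, S x → (R x u ↔ R x v)) :=
  ⟨fun _ _ _ => Iff.rfl, fun h x hx => (h x hx).symm,
    fun h₁ h₂ x hx => (h₁ x hx).trans (h₂ x hx)⟩

section Semigeneric

variable {V : Type*} {E : V → V → Prop} [∀ x y, Decidable (E x y)]

variable (E) in
def ParityConstraint : Prop :=
  ∀ u v x y : V, u ≠ v → x ≠ y → dperp E u v → dperp E x y → ¬dperp E u x →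
    ((if E u x then 1 else 0) + (if E u y then 1 else 0) +
     (if E v x then 1 else 0) + (if E v y then 1 else 0)) % 2 = 0

theorem ParityConstraint.separates_iff (hparity : ParityConstraint E) {u v x y : V}
    (hxy : dperp E x y) (huv : dperp E u v) (hxu : ¬dperp E x u) :
    ((E x u ↔ E x v) ↔ (E y u ↔ E y v)) := by
  rcases eq_or_ne x y with rfl | hxy'
  · rfl
  rcases eq_or_ne u v with rfl | huv'
  · simp
  exact iff_iff_iff_of_indicator_sum_even (hparity x y u v hxy' huv' hxy huv hxu)

theorem ParityConstraint.forall_iff_iff (hparity : ParityConstraint E)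
    (hequiv : Equivalence (dperp E)) {p p' u v : V} (hpp' : ¬dperp E p p')
    (hu : dperp E u p) (hv : dperp E v p) :
    (∀ x, dperp E x p' → (E x u ↔ E x v)) ↔ (E p' u ↔ E p' v) := by
  refine ⟨fun h => h p' (hequiv.refl p'), fun h x hx => ?_⟩
  have huv : dperp E u v := hequiv.trans hu (hequiv.symm hv)
  have hp'u : ¬dperp E p' u := fun h => hpp' (hequiv.symm (hequiv.trans h hu))
  exact (hparity.separates_iff (hequiv.symm hx) huv hp'u).mp h

end Semigeneric

theorem semigeneric_sim_two_classes_general {V : Type*}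
    (E : V → V → Prop) [∀ x y, Decidable (E x y)]
    (hequiv : Equivalence (dperp E))
    (hparity : ∀ u v x y : V, u ≠ v → x ≠ y → dperp E u v → dperp E x y →
      ¬dperp E u x →
      ((if E u x then 1 else 0) + (if E u y then 1 else 0) +
       (if E v x then 1 else 0) + (if E v y then 1 else 0)) % 2 = 0)
    (p p' : V) (hpp' : ¬dperp E p p') :
    Equivalence (fun u v : V => ∀ x, dperp E x p' → (E x u ↔ E x v)) ∧
    ∀ u v w : V, dperp E u p → dperp E v p → dperp E w p →
      (∀ x, dperp E x p' → (E x u ↔ E x v)) ∨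
      (∀ x, dperp E x p' → (E x u ↔ E x w)) ∨
      (∀ x, dperp E x p' → (E x v ↔ E x w)) := by
  have hparity : ParityConstraint E := hparity
  refine ⟨equivalence_forall_iff _ _, fun u v w hu hv hw => ?_⟩
  rw [hparity.forall_iff_iff hequiv hpp' hu hv, hparity.forall_iff_iff hequiv hpp' hu hw,
    hparity.forall_iff_iff hequiv hpp' hv hw]
  tauto

/-- In a finite complete multipartite directed graph satisfying the semigeneric parity
constraint, for each part `P` (the `dperp`-class of `p`) and each other part `P'`
(the class of `p'`), the relation `u ∼_{P'} v` (same in-neighbourhood from `P'`) is an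
equivalence relation on `P` with at most two classes. -/
theorem semigeneric_sim_two_classes {V : Type*} [Fintype V]
    (E : V → V → Prop) [∀ x y, Decidable (E x y)]
    (hirr : ∀ x, ¬E x x) (hasym : ∀ x y, E x y → ¬E y x)
    (hequiv : Equivalence (dperp E))
    (hparity : ∀ u v x y : V, u ≠ v → x ≠ y → dperp E u v → dperp E x y →
      ¬dperp E u x →
      ((if E u x then 1 else 0) + (if E u y then 1 else 0) +
       (if E v x then 1 else 0) + (if E v y then 1 else 0)) % 2 = 0)
    (p p' : V) (hpp' : ¬dperp E p p') :
    Equivalence (fun u v : V => ∀ x, dperp E x p' → (E x u ↔ E x v)) ∧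
    ∀ u v w : V, dperp E u p → dperp E v p → dperp E w p →
      (∀ x, dperp E x p' → (E x u ↔ E x v)) ∨
      (∀ x, dperp E x p' → (E x u ↔ E x w)) ∨
      (∀ x, dperp E x p' → (E x v ↔ E x w)) :=
  semigeneric_sim_two_classes_general E hequiv hparity p p' hpp'
end

section
/- Let G be a finite directed graph satisfying the setup of the semigeneric parity constraint (non-edge relation an equivalence relation with parts, and even number of edges from any pair in one part to any pair in another part). Then the relation ∼ defined on the vertex set by u ∼ v iff u and v lie in the same part P and for every other part P' and every x ∈ P', E(x,u) ↔ E(x,v), is an equivalence relation, and if G has k parts then ∼ has at most k·2^{k-1} equivalence classes. -/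
/-- `u ∼ v`: `u` and `v` are in the same part and have the same in-neighbourhood from
every other part. -/
def dsim {V : Type*} (E : V → V → Prop) (u v : V) : Prop :=
  dperp E u v ∧ ∀ x, ¬dperp E x u → (E x u ↔ E x v)

/-!
Two vertices `u, v` of the same part whose in-neighbourhoods agree on a set `P` meeting every
part are already `∼`-equivalent: if `x` lies outside their part and `p ≠ x` is a vertex of `P`
in the part of `x`, the parity constraint on `{x, p} → {u, v}` transfers `E p u ↔ E p v` to
`E x u ↔ E x v`. Hence the `∼`-class of a vertex is determined by its part `p ∈ P` together with
its in-neighbours in `P \ {p}`, and there are at most `|P| · 2^(|P|-1)` such data.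
-/

open Finset

section

variable {V : Type*} {E : V → V → Prop}

def SemigenericParity (E : V → V → Prop) [∀ x y, Decidable (E x y)] : Prop :=
  ∀ u v x y : V, u ≠ v → x ≠ y → dperp E u v → dperp E x y → ¬dperp E u x →
    ((if E u x then 1 else 0) + (if E u y then 1 else 0) +
      (if E v x then 1 else 0) + (if E v y then 1 else 0)) % 2 = 0

theorem dsim_equivalence (hequiv : Equivalence (dperp E)) : Equivalence (dsim E) where
  refl x := ⟨hequiv.refl x, fun _ _ => Iff.rfl⟩
  symm := fun ⟨huv, hin⟩ =>
    ⟨hequiv.symm huv, fun x hx => (hin x fun h => hx (hequiv.trans h huv)).symm⟩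
  trans := fun ⟨huv, hin⟩ ⟨hvw, hin'⟩ =>
    ⟨hequiv.trans huv hvw, fun x hx =>
      (hin x hx).trans (hin' x fun h => hx (hequiv.trans h (hequiv.symm huv)))⟩

theorem iff_of_ite_add_mod_two {a b c d : Prop} [Decidable a] [Decidable b] [Decidable c]
    [Decidable d]
    (h : ((if a then 1 else 0) + (if b then 1 else 0) + (if c then 1 else 0) +
      (if d then 1 else 0)) % 2 = 0) (hcd : c ↔ d) : a ↔ b := by
  split_ifs at h <;> tauto

theorem dsim_of_forall_mem_iff [∀ x y, Decidable (E x y)] (hequiv : Equivalence (dperp E))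
    (hparity : SemigenericParity E) {P : Finset V} (hPcover : ∀ v : V, ∃ p ∈ P, dperp E p v) {u v : V} (huv : dperp E u v)
    (hP : ∀ q ∈ P, ¬dperp E q u → (E q u ↔ E q v)) : dsim E u v := by
  refine ⟨huv, fun x hxu => ?_⟩
  obtain ⟨p, hpP, hpx⟩ := hPcover x
  rcases eq_or_ne p x with rfl | hpx'
  · exact hP p hpP hxu
  rcases eq_or_ne u v with rfl | huv'
  · rfl
  have hpu : ¬dperp E p u := fun h => hxu (hequiv.trans (hequiv.symm hpx) h)
  exact iff_of_ite_add_mod_two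
    (hparity x p u v hpx'.symm huv' (hequiv.symm hpx) huv hxu) (hP p hpP hpu)

theorem card_sigma_powerset_erase {α : Type*} [DecidableEq α] (P : Finset α) :
    (P.sigma fun p => (P.erase p).powerset).card = P.card * 2 ^ (P.card - 1) := by
  rw [card_sigma, sum_congr rfl fun p hp => by rw [card_powerset, card_erase_of_mem hp],
    sum_const, smul_eq_mul]

theorem exists_finset_card_le_forall_exists_eq {α β : Type*} [Fintype α] [DecidableEq β]
    (f : α → β) {S : Finset β} (hS : ∀ a, f a ∈ S) :
    ∃ reps : Finset α, reps.card ≤ S.card ∧ ∀ a, ∃ b ∈ reps, f b = f a := by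
  obtain ⟨reps, -, hinj, himage⟩ :=
    exists_subset_injOn_image_eq_of_surjOn (f := f) Set.univ (univ.image f)
      fun b hb => by simpa using hb
  refine ⟨reps, ?_, fun a => ?_⟩
  · rw [← card_image_of_injOn hinj, himage]
    exact card_le_card (image_subset_iff.2 fun a _ => hS a)
  · exact mem_image.1 (himage ▸ mem_image_of_mem f (mem_univ a))

theorem exists_dsim_reps_card_le [Fintype V] [∀ x y, Decidable (E x y)]
    (hequiv : Equivalence (dperp E)) (hparity : SemigenericParity E)
    {P : Finset V} (hPcover : ∀ v : V, ∃ p ∈ P, dperp E p v) :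
    ∃ reps : Finset V, reps.card ≤ P.card * 2 ^ (P.card - 1) ∧
      ∀ v : V, ∃ u ∈ reps, dsim E u v := by
  classical
  choose part hpartP hpart using hPcover
  let signature (v : V) : Σ _ : V, Finset V := ⟨part v, (P.erase (part v)).filter (E · v)⟩
  have hsignature (v : V) : signature v ∈ P.sigma fun p => (P.erase p).powerset :=
    mem_sigma.2 ⟨hpartP v, mem_powerset.2 (filter_subset _ _)⟩
  obtain ⟨reps, hcard, hreps⟩ := exists_finset_card_le_forall_exists_eq signature hsignature
  refine ⟨reps, hcard.trans (card_sigma_powerset_erase P).le, fun v => ?_⟩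
  obtain ⟨u, hu, huv⟩ := hreps v
  obtain ⟨hpart_eq, hnbrs⟩ : part u = part v ∧ _ := by simpa [signature] using huv
  refine ⟨u, hu, dsim_of_forall_mem_iff hequiv hparity (fun w => ⟨part w, hpartP w, hpart w⟩)
    ?_ fun q hq hqu => ?_⟩
  · exact hequiv.trans (hequiv.symm (hpart u)) (hpart_eq ▸ hpart v)
  · have hq_ne : q ≠ part u := by rintro rfl; exact hqu (hpart u)
    simpa [hq, hq_ne, hpart_eq ▸ hq_ne] using congrArg (q ∈ ·) hnbrs

end

theorem semigeneric_sim_equivalence_card_general {V : Type*} [Fintype V]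
    (E : V → V → Prop) [∀ x y, Decidable (E x y)]
    (hequiv : Equivalence (dperp E))
    (hparity : ∀ u v x y : V, u ≠ v → x ≠ y → dperp E u v → dperp E x y →
      ¬dperp E u x →
      ((if E u x then 1 else 0) + (if E u y then 1 else 0) +
       (if E v x then 1 else 0) + (if E v y then 1 else 0)) % 2 = 0)
    (k : ℕ) (P : Finset V) (hPcard : P.card = k)
    (hPcover : ∀ v : V, ∃ p ∈ P, dperp E p v) :
    Equivalence (dsim E) ∧
    ∃ reps : Finset V, reps.card ≤ k * 2 ^ (k - 1) ∧
      ∀ v : V, ∃ u ∈ reps, dsim E u v := by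
  subst hPcard
  exact ⟨dsim_equivalence hequiv, exists_dsim_reps_card_le hequiv hparity hPcover⟩

/-- In a finite `k`-partite directed graph satisfying the semigeneric parity constraint,
the relation `∼` is an equivalence relation with at most `k·2^(k-1)` classes. -/
theorem semigeneric_sim_equivalence_card {V : Type*} [Fintype V]
    (E : V → V → Prop) [∀ x y, Decidable (E x y)]
    (hirr : ∀ x, ¬E x x) (hasym : ∀ x y, E x y → ¬E y x)
    (hequiv : Equivalence (dperp E))
    (hparity : ∀ u v x y : V, u ≠ v → x ≠ y → dperp E u v → dperp E x y →
      ¬dperp E u x →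
      ((if E u x then 1 else 0) + (if E u y then 1 else 0) +
       (if E v x then 1 else 0) + (if E v y then 1 else 0)) % 2 = 0)
    (k : ℕ) (P : Finset V) (hPcard : P.card = k)
    (hPcover : ∀ v : V, ∃ p ∈ P, dperp E p v)
    (hPsep : ∀ p ∈ P, ∀ q ∈ P, dperp E p q → p = q) :
    Equivalence (dsim E) ∧
    ∃ reps : Finset V, reps.card ≤ k * 2 ^ (k - 1) ∧
      ∀ v : V, ∃ u ∈ reps, dsim E u v :=
  semigeneric_sim_equivalence_card_general E hequiv hparity k P hPcard hPcover
end

section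
/- In a finite directed graph G satisfying the semigeneric parity constraint, for any two distinct parts P and P' and any x ∈ P', the two sets {u ∈ P : E(x,u)} and {v ∈ P : E(v,x)} partition P, and these two sets do not depend on the choice of x ∈ P' in the following sense: they are exactly the equivalence classes of the relation u ∼_{P'} v (for all z ∈ P', E(z,u) ↔ E(z,v)) whenever P' is nonempty and all edges between P and P' are present. -/
theorem iff_of_indicator_sum_mod_two_eq_zero {a b c d : Prop}
    [Decidable a] [Decidable b] [Decidable c] [Decidable d]
    (h : ((if a then 1 else 0) + (if b then 1 else 0) +
      (if c then 1 else 0) + (if d then 1 else 0)) % 2 = 0)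
    (hac : a ↔ c) : b ↔ d := by
  by_cases a <;> by_cases b <;> by_cases c <;> by_cases d <;> simp_all

section dperp

variable {V : Type*} {E : V → V → Prop}

theorem dperp_comm {x y : V} : dperp E x y ↔ dperp E y x := by
  unfold dperp
  rw [eq_comm, and_comm]

theorem not_dperp_of_dperp_of_dperp (hequiv : Equivalence (dperp E)) {u₀ x₀ u z : V}
    (h : ¬dperp E u₀ x₀) (hu : dperp E u₀ u) (hz : dperp E x₀ z) : ¬dperp E u z :=
  fun huz => h (hequiv.trans hu (hequiv.trans huz (hequiv.symm hz)))

theorem edge_iff_not_edge_of_not_dperp (hasym : ∀ x y, E x y → ¬E y x) {a b : V}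
    (h : ¬dperp E a b) : E a b ↔ ¬E b a :=
  ⟨hasym a b, fun hba => Classical.byContradiction fun hab => h (Or.inr ⟨hab, hba⟩)⟩

theorem edge_to_iff_edge_from (hasym : ∀ x y, E x y → ¬E y x) {a b z : V}
    (ha : ¬dperp E a z) (hb : ¬dperp E b z) : (E z a ↔ E z b) ↔ (E a z ↔ E b z) := by
  rw [edge_iff_not_edge_of_not_dperp hasym (dperp_comm.not.mp ha),
    edge_iff_not_edge_of_not_dperp hasym (dperp_comm.not.mp hb), not_iff_not]

end dperp

theorem semigeneric_partition_independent_general {V : Type*}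
    (E : V → V → Prop) [∀ x y, Decidable (E x y)]
    (hasym : ∀ x y, E x y → ¬E y x)
    (hequiv : Equivalence (dperp E))
    (hparity : ∀ u v x y : V, u ≠ v → x ≠ y → dperp E u v → dperp E x y →
      ¬dperp E u x →
      ((if E u x then 1 else 0) + (if E u y then 1 else 0) +
       (if E v x then 1 else 0) + (if E v y then 1 else 0)) % 2 = 0)
    (u₀ x₀ : V) (h : ¬dperp E u₀ x₀) :
    -- the two sets partition the part of `u₀`:
    (∀ u, dperp E u₀ u → (E x₀ u ↔ ¬E u x₀)) ∧
    -- they are exactly the `∼_{P'}` classes, independently of the choice of `x₀`: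
    (∀ u v, dperp E u₀ u → dperp E u₀ v →
      ((∀ z, dperp E x₀ z → (E z u ↔ E z v)) ↔ (E x₀ u ↔ E x₀ v))) := by
  have cross : ∀ {u z}, dperp E u₀ u → dperp E x₀ z → ¬dperp E u z :=
    not_dperp_of_dperp_of_dperp hequiv h
  have hx₀ : dperp E x₀ x₀ := hequiv.refl x₀
  refine ⟨fun u hu => edge_iff_not_edge_of_not_dperp hasym
    (dperp_comm.not.mp (cross hu hx₀)), fun u v hu hv => ⟨fun hall => hall x₀ hx₀, ?_⟩⟩
  intro hx z hz
  rw [edge_to_iff_edge_from hasym (cross hu hz) (cross hv hz)]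
  rw [edge_to_iff_edge_from hasym (cross hu hx₀) (cross hv hx₀)] at hx
  by_cases huv : u = v
  · rw [huv]
  by_cases hzx : z = x₀
  · rwa [hzx]
  exact iff_of_indicator_sum_mod_two_eq_zero (hparity u v x₀ z huv (Ne.symm hzx)
    (hequiv.trans (hequiv.symm hu) hv) hz (cross hu hx₀)) hx

/-- In a finite complete multipartite directed graph satisfying the semigeneric parity
constraint, for distinct parts `P` (class of `u₀`) and `P'` (class of `x₀`), the sets
`{u ∈ P : E(x₀,u)}` and `{v ∈ P : E(v,x₀)}` partition `P`, and they are exactly the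
classes of the relation `∼_{P'}` (so they do not depend on the choice of `x₀ ∈ P'`). -/
theorem semigeneric_partition_independent {V : Type*} [Fintype V]
    (E : V → V → Prop) [∀ x y, Decidable (E x y)]
    (hirr : ∀ x, ¬E x x) (hasym : ∀ x y, E x y → ¬E y x)
    (hequiv : Equivalence (dperp E))
    (hparity : ∀ u v x y : V, u ≠ v → x ≠ y → dperp E u v → dperp E x y →
      ¬dperp E u x →
      ((if E u x then 1 else 0) + (if E u y then 1 else 0) +
       (if E v x then 1 else 0) + (if E v y then 1 else 0)) % 2 = 0)
    (u₀ x₀ : V) (h : ¬dperp E u₀ x₀) :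
    -- the two sets partition the part of `u₀`:
    (∀ u, dperp E u₀ u → (E x₀ u ↔ ¬E u x₀)) ∧
    -- they are exactly the `∼_{P'}` classes, independently of the choice of `x₀`:
    (∀ u v, dperp E u₀ u → dperp E u₀ v →
      ((∀ z, dperp E x₀ z → (E z u ↔ E z v)) ↔ (E x₀ u ↔ E x₀ v))) :=
  semigeneric_partition_independent_general E hasym hequiv hparity u₀ x₀ h
end

section
/- If the class of finite substructures of an ordered expanded tournament T* has the Ramsey property, then for every n ≥ 1 the class of finite substructures of T[I_n]* has the Ramsey property: for all finite A, B ⊆ T[I_n]* and all r ∈ ℕ there is a finite C ⊆ T[I_n]* such that every r-coloring of the copies of A in C is constant on the copies of A inside some copy of B in C. -/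
/-- Isomorphism of finite substructures of the ordered tournament `T*` (universe `ℕ`,
order `≤`, edge relation `E`). -/
def IsoT (E : ℕ → ℕ → Prop) (A B : Finset ℕ) : Prop :=
  ∃ f : ℕ → ℕ, Set.BijOn f ↑A ↑B ∧
    (∀ x ∈ A, ∀ y ∈ A, (x < y ↔ f x < f y)) ∧
    (∀ x ∈ A, ∀ y ∈ A, (E x y ↔ E (f x) (f y)))

/-- Isomorphism of finite substructures of `T[Iₙ]*`: a bijection preserving the level
predicates `Lᵢ`, the lexicographic order (equivalently, the order on first
coordinates), and the edges, which are induced from `T` via first coordinates. -/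
def IsoTI {n : ℕ} (E : ℕ → ℕ → Prop) (A B : Finset (ℕ × Fin n)) : Prop :=
  ∃ f : ℕ × Fin n → ℕ × Fin n, Set.BijOn f ↑A ↑B ∧
    (∀ p ∈ A, (f p).2 = p.2) ∧
    (∀ p ∈ A, ∀ q ∈ A, (p.1 < q.1 ↔ (f p).1 < (f q).1)) ∧
    (∀ p ∈ A, ∀ q ∈ A, p.1 ≠ q.1 → (E p.1 q.1 ↔ E (f p).1 (f q).1))

/-!
A copy of a finite `A ⊆ T[Iₙ]*` is determined by its projection to `T`: levels are fixed, and
first coordinates are moved by the unique increasing bijection between the projections. Hence a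
colouring of the copies of `A` descends to a colouring of the copies of the projection `πA` in
`T*`. The Ramsey
property of `T*` gives a copy `D` of `πB` on which the latter is monochromatic, and the copy of
`B` lying over `D` (same levels) is then monochromatic for the original colouring.
-/

theorem Finset.eqOn_of_strictMonoOn_of_image_eq {α β : Type*} [LinearOrder α] [LinearOrder β]
    [DecidableEq β] {s : Finset α} {f g : α → β} (hf : StrictMonoOn f s) (hg : StrictMonoOn g s)
    (h : s.image f = s.image g) : Set.EqOn f g s := by
  have hcard : (s.image f).card = s.card := card_image_of_injOn hf.injOn
  have hcard' : (s.image g).card = s.card := h ▸ hcard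
  set e := s.orderEmbOfFin rfl
  have hfe : f ∘ e = (s.image f).orderEmbOfFin hcard :=
    orderEmbOfFin_unique _ (fun i => mem_image_of_mem f (orderEmbOfFin_mem s rfl i))
      fun _ _ hij => hf (orderEmbOfFin_mem s rfl _) (orderEmbOfFin_mem s rfl _) (e.strictMono hij)
  have hge : g ∘ e = (s.image g).orderEmbOfFin hcard' :=
    orderEmbOfFin_unique _ (fun i => mem_image_of_mem g (orderEmbOfFin_mem s rfl i))
      fun _ _ hij => hg (orderEmbOfFin_mem s rfl _) (orderEmbOfFin_mem s rfl _) (e.strictMono hij)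
  intro x hx
  obtain ⟨i, rfl⟩ : x ∈ Set.range e := by rwa [range_orderEmbOfFin]
  have : f ∘ e = g ∘ e := by rw [hfe, hge]; congr!
  exact congrFun this i

theorem exists_strictMonoOn_factor_fst {α γ δ : Type*} [LinearOrder α] [DecidableEq α]
    {A : Finset (α × γ)} {f : α × γ → α × δ}
    (hf : ∀ p ∈ A, ∀ q ∈ A, (p.1 < q.1 ↔ (f p).1 < (f q).1)) :
    ∃ F : α → α, StrictMonoOn F ↑(A.image Prod.fst) ∧ ∀ p ∈ A, F p.1 = (f p).1 := by
  have hfactor : (fun p : A => (f p).1).FactorsThrough (fun p : A => p.1.1) := by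
    intro p q hpq
    refine le_antisymm (not_lt.1 fun h => ?_) (not_lt.1 fun h => ?_)
    · exact (hf q q.2 p p.2).2 h |>.ne' hpq
    · exact (hf p p.2 q q.2).2 h |>.ne hpq
  set F := Function.extend (fun p : A => p.1.1) (fun p : A => (f p).1) id
  have hF : ∀ p ∈ A, F p.1 = (f p).1 := fun p hp => hfactor.extend_apply id ⟨p, hp⟩
  refine ⟨F, ?_, hF⟩
  rintro _ hx _ hy hxy
  obtain ⟨p, hp, rfl⟩ := Finset.mem_image.1 hx
  obtain ⟨q, hq, rfl⟩ := Finset.mem_image.1 hy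
  rw [hF p hp, hF q hq]
  exact (hf p hp q hq).1 hxy

section

variable {n : ℕ} {E : ℕ → ℕ → Prop}

theorem isoTI_iff {A S : Finset (ℕ × Fin n)} :
    IsoTI E A S ↔ ∃ F : ℕ → ℕ, StrictMonoOn F ↑(A.image Prod.fst) ∧
      (∀ x ∈ A.image Prod.fst, ∀ y ∈ A.image Prod.fst, x ≠ y → (E x y ↔ E (F x) (F y))) ∧
      S = A.image fun p => (F p.1, p.2) := by
  constructor
  · rintro ⟨f, hbij, hlevel, horder, hedge⟩
    obtain ⟨F, hmono, hF⟩ := exists_strictMonoOn_factor_fst horder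
    refine ⟨F, hmono, ?_, ?_⟩
    · intro _ hx _ hy hxy
      obtain ⟨p, hp, rfl⟩ := Finset.mem_image.1 hx
      obtain ⟨q, hq, rfl⟩ := Finset.mem_image.1 hy
      rw [hF p hp, hF q hq]
      exact hedge p hp q hq hxy
    · rw [← Finset.coe_inj, Finset.coe_image, ← hbij.image_eq]
      exact Set.image_congr fun p hp => Prod.ext (hF p hp).symm (hlevel p hp)
  · rintro ⟨F, hmono, hedge, rfl⟩
    have hinj : Set.InjOn (fun p : ℕ × Fin n => (F p.1, p.2)) A := by
      intro p hp q hq hpq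
      simp only [Prod.mk.injEq] at hpq
      exact Prod.ext (hmono.injOn (Finset.mem_image_of_mem _ hp)
        (Finset.mem_image_of_mem _ hq) hpq.1) hpq.2
    refine ⟨fun p => (F p.1, p.2), ?_, fun _ _ => rfl, ?_, ?_⟩
    · rw [Finset.coe_image]
      exact hinj.bijOn_image
    · intro p hp q hq
      exact (hmono.lt_iff_lt (Finset.mem_image_of_mem _ hp) (Finset.mem_image_of_mem _ hq)).symm
    · intro p hp q hq
      exact hedge _ (Finset.mem_image_of_mem _ hp) _ (Finset.mem_image_of_mem _ hq)

theorem IsoTI.isoT_image_fst (hirr : ∀ x, ¬E x x) {A S : Finset (ℕ × Fin n)}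
    (h : IsoTI E A S) : IsoT E (A.image Prod.fst) (S.image Prod.fst) := by
  obtain ⟨F, hmono, hedge, rfl⟩ := isoTI_iff.1 h
  have himage : (A.image fun p => (F p.1, p.2)).image Prod.fst = (A.image Prod.fst).image F := by
    simp only [Finset.image_image, Function.comp_def]
  refine ⟨F, ?_, fun x hx y hy => (hmono.lt_iff_lt hx hy).symm, fun x hx y hy => ?_⟩
  · rw [himage, Finset.coe_image (f := F)]
    exact hmono.injOn.bijOn_image
  rcases eq_or_ne x y with rfl | hxy
  · simp only [hirr]
  · exact hedge x hx y hy hxy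

theorem IsoTI.eq_of_image_fst_eq {A S₁ S₂ : Finset (ℕ × Fin n)} (h₁ : IsoTI E A S₁)
    (h₂ : IsoTI E A S₂) (h : S₁.image Prod.fst = S₂.image Prod.fst) : S₁ = S₂ := by
  obtain ⟨F₁, hmono₁, -, rfl⟩ := isoTI_iff.1 h₁
  obtain ⟨F₂, hmono₂, -, rfl⟩ := isoTI_iff.1 h₂
  have himage : (A.image Prod.fst).image F₁ = (A.image Prod.fst).image F₂ := by
    simpa only [Finset.image_image, Function.comp_def] using h
  have hF := Finset.eqOn_of_strictMonoOn_of_image_eq hmono₁ hmono₂ himage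
  exact Finset.image_congr fun p hp => by rw [hF (Finset.mem_image_of_mem _ hp)]

theorem IsoT.exists_isoTI_subset_product {B : Finset (ℕ × Fin n)} {D : Finset ℕ}
    (h : IsoT E (B.image Prod.fst) D) : ∃ B', B' ⊆ D ×ˢ Finset.univ ∧ IsoTI E B B' := by
  obtain ⟨g, hbij, horder, hedge⟩ := h
  refine ⟨B.image fun p => (g p.1, p.2), ?_, isoTI_iff.2 ⟨g, ?_, ?_, rfl⟩⟩
  · intro _ hq
    obtain ⟨p, hp, rfl⟩ := Finset.mem_image.1 hq
    exact Finset.mem_product.2 ⟨hbij.mapsTo (Finset.mem_image_of_mem _ hp), Finset.mem_univ _⟩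
  · exact fun x hx y hy hxy => (horder x hx y hy).1 hxy
  · exact fun x hx y hy _ => hedge x hx y hy

end

theorem ramsey_TIn_general {n : ℕ} (E : ℕ → ℕ → Prop)
    (hirr : ∀ x, ¬E x x)
    (hRam : ∀ (r : ℕ) (A B : Finset ℕ), ∃ C : Finset ℕ,
      ∀ χ : Finset ℕ → Fin r, ∃ B' : Finset ℕ, B' ⊆ C ∧ IsoT E B B' ∧
        ∀ A₁ A₂ : Finset ℕ, A₁ ⊆ B' → A₂ ⊆ B' → IsoT E A A₁ → IsoT E A A₂ →
          χ A₁ = χ A₂) :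
    ∀ (r : ℕ) (A B : Finset (ℕ × Fin n)), ∃ C : Finset (ℕ × Fin n),
      ∀ χ : Finset (ℕ × Fin n) → Fin r, ∃ B' : Finset (ℕ × Fin n),
        B' ⊆ C ∧ IsoTI E B B' ∧
        ∀ A₁ A₂ : Finset (ℕ × Fin n), A₁ ⊆ B' → A₂ ⊆ B' →
          IsoTI E A A₁ → IsoTI E A A₂ → χ A₁ = χ A₂ := by
  intro r A B
  obtain ⟨C, hC⟩ := hRam r (A.image Prod.fst) (B.image Prod.fst)
  refine ⟨C ×ˢ Finset.univ, fun χ => ?_⟩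
  let proj : {S // IsoTI E A S} → Finset ℕ := fun S => S.1.image Prod.fst
  have hproj : proj.Injective := fun S₁ S₂ h => Subtype.ext (S₁.2.eq_of_image_fst_eq S₂.2 h)
  obtain ⟨D, hDC, hBD, hmono⟩ := hC (Function.extend proj (fun S => χ S.1) fun _ => χ ∅)
  obtain ⟨B', hB'D, hBB'⟩ := hBD.exists_isoTI_subset_product
  have hprojD : ∀ S ⊆ B', S.image Prod.fst ⊆ D := fun S hS =>
    (Finset.image_subset_image (hS.trans hB'D)).trans Finset.subset_product_image_fst
  refine ⟨B', hB'D.trans (Finset.product_subset_product_left hDC), hBB',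
    fun A₁ A₂ h₁ h₂ i₁ i₂ => ?_⟩
  have hχ := hmono _ _ (hprojD A₁ h₁) (hprojD A₂ h₂)
    (i₁.isoT_image_fst hirr) (i₂.isoT_image_fst hirr)
  rwa [hproj.extend_apply _ _ ⟨A₁, i₁⟩, hproj.extend_apply _ _ ⟨A₂, i₂⟩] at hχ

/-- If the age of `T*` has the Ramsey property, then so does the age of `T[Iₙ]*`. -/
theorem ramsey_TIn {n : ℕ} (hn : 1 ≤ n) (E : ℕ → ℕ → Prop)
    (htour : ∀ x y : ℕ, x ≠ y → (E x y ↔ ¬E y x)) (hirr : ∀ x, ¬E x x)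
    (hRam : ∀ (r : ℕ) (A B : Finset ℕ), ∃ C : Finset ℕ,
      ∀ χ : Finset ℕ → Fin r, ∃ B' : Finset ℕ, B' ⊆ C ∧ IsoT E B B' ∧
        ∀ A₁ A₂ : Finset ℕ, A₁ ⊆ B' → A₂ ⊆ B' → IsoT E A A₁ → IsoT E A A₂ →
          χ A₁ = χ A₂) :
    ∀ (r : ℕ) (A B : Finset (ℕ × Fin n)), ∃ C : Finset (ℕ × Fin n),
      ∀ χ : Finset (ℕ × Fin n) → Fin r, ∃ B' : Finset (ℕ × Fin n),
        B' ⊆ C ∧ IsoTI E B B' ∧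
        ∀ A₁ A₂ : Finset (ℕ × Fin n), A₁ ⊆ B' → A₂ ⊆ B' →
          IsoTI E A A₁ → IsoTI E A A₂ → χ A₁ = χ A₂ :=
  ramsey_TIn_general E hirr hRam
end

section
/- If the classes of finite substructures of C¹ := I_{n-1}[T]* and of T* each have the Ramsey property, then the class of finite substructures of I_n[T]* has the Ramsey property. More precisely, given finite A ⊆ B ⊆ I_n[T]* each meeting all n parts, letting A⁰, B⁰ be their restrictions to the first n−1 parts and A_{n-1}, B_{n-1} their restrictions to the last part, if C¹ → (B_{n-1})^{A_{n-1}}_{r^{|copies of A⁰ in B⁰|}} and C⁰ → (B⁰)^{A⁰}_{r^{|copies of A_{n-1} in C¹|}}, then C⁰ ⊔ C¹ → (B)^A_r. -/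
/-- Isomorphism of finite substructures of `I_n[T]*`: vertices are pairs (part, point of
`T`); an isomorphism preserves the part predicates, the order within parts (the order is
convex with `P₀ < … < P_{n-1}`, so it is determined by parts and the within-part order),
and the `T`-edges within parts (there are no edges across parts). -/
def IsoP {n : ℕ} (E : ℕ → ℕ → Prop) (A B : Finset (Fin n × ℕ)) : Prop :=
  ∃ f : Fin n × ℕ → Fin n × ℕ, Set.BijOn f ↑A ↑B ∧
    (∀ p ∈ A, (f p).1 = p.1) ∧
    (∀ p ∈ A, ∀ q ∈ A, p.1 = q.1 → (p.2 < q.2 ↔ (f p).2 < (f q).2)) ∧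
    (∀ p ∈ A, ∀ q ∈ A, p.1 = q.1 → p.2 ≠ q.2 → (E p.2 q.2 ↔ E (f p).2 (f q).2))

/-- The copies of `A` in `C`. -/
def CopiesP {n : ℕ} (E : ℕ → ℕ → Prop) (A C : Finset (Fin n × ℕ)) :
    Set (Finset (Fin n × ℕ)) :=
  {A' | A' ⊆ C ∧ IsoP E A A'}

/-- `C → (B)^A_r`: every `r`-coloring of copies of `A` in `C` is constant on the copies
of `A` inside some copy of `B` in `C`. -/
def ArrowP {n : ℕ} (E : ℕ → ℕ → Prop) (A B C : Finset (Fin n × ℕ)) (r : ℕ) : Prop :=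
  ∀ χ : Finset (Fin n × ℕ) → Fin r,
    ∃ B' ∈ CopiesP E B C, ∀ A₁ ∈ CopiesP E A B', ∀ A₂ ∈ CopiesP E A B', χ A₁ = χ A₂

/-!
Product argument. Colour each copy `A'` of `A⁰` in `C⁰` by the whole function
`A'' ↦ χ (A' ∪ A'')` on copies `A''` of `A_{n-1}` in `C¹`; the first arrow yields a copy `B⁰'`
of `B⁰` on which this function does not depend on `A'`. Fixing one copy `A₀'` of `A⁰` in `B⁰'`,
the second arrow yields a copy `B'_{n-1}` of `B_{n-1}` on which `A'' ↦ χ (A₀' ∪ A'')` is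
constant. Since every copy of `A` in `B⁰' ∪ B'_{n-1}` splits as `A' ∪ A''`, `χ` is constant on
them.
-/

section Copies

variable {n : ℕ} {E : ℕ → ℕ → Prop}

def PreservesOn (E : ℕ → ℕ → Prop) (f : Fin n × ℕ → Fin n × ℕ) (S : Finset (Fin n × ℕ)) :
    Prop :=
  (∀ p ∈ S, (f p).1 = p.1) ∧
    (∀ p ∈ S, ∀ q ∈ S, p.1 = q.1 → (p.2 < q.2 ↔ (f p).2 < (f q).2)) ∧
    (∀ p ∈ S, ∀ q ∈ S, p.1 = q.1 → p.2 ≠ q.2 → (E p.2 q.2 ↔ E (f p).2 (f q).2))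

theorem isoP_iff {A B : Finset (Fin n × ℕ)} :
    IsoP E A B ↔ ∃ f, Set.BijOn f ↑A ↑B ∧ PreservesOn E f A :=
  Iff.rfl

theorem isoP_refl (A : Finset (Fin n × ℕ)) : IsoP E A A :=
  isoP_iff.2 ⟨id, Set.bijOn_id _, by simp [PreservesOn]⟩

theorem PreservesOn.mono {f : Fin n × ℕ → Fin n × ℕ} {S T : Finset (Fin n × ℕ)}
    (hf : PreservesOn E f T) (hST : S ⊆ T) : PreservesOn E f S :=
  ⟨fun p hp => hf.1 p (hST hp), fun p hp q hq => hf.2.1 p (hST hp) q (hST hq),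
    fun p hp q hq => hf.2.2 p (hST hp) q (hST hq)⟩

theorem PreservesOn.ite {P : Fin n → Prop} [DecidablePred P] {f₀ f₁ : Fin n × ℕ → Fin n × ℕ}
    {S : Finset (Fin n × ℕ)} (h₀ : PreservesOn E f₀ (S.filter fun p => ¬P p.1))
    (h₁ : PreservesOn E f₁ (S.filter fun p => P p.1)) :
    PreservesOn E (fun p => if P p.1 then f₁ p else f₀ p) S := by
  obtain ⟨hpart₀, hord₀, hedge₀⟩ := h₀
  obtain ⟨hpart₁, hord₁, hedge₁⟩ := h₁
  refine ⟨fun p hp => ?_, fun p hp q hq hpq => ?_, fun p hp q hq hpq => ?_⟩ <;>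
    by_cases h : P p.1
  · simpa [h] using hpart₁ p (Finset.mem_filter.2 ⟨hp, h⟩)
  · simpa [h] using hpart₀ p (Finset.mem_filter.2 ⟨hp, h⟩)
  · have h' : P q.1 := hpq ▸ h
    simpa [h, h'] using hord₁ p (Finset.mem_filter.2 ⟨hp, h⟩) q (Finset.mem_filter.2 ⟨hq, h'⟩) hpq
  · have h' : ¬P q.1 := hpq ▸ h
    simpa [h, h'] using hord₀ p (Finset.mem_filter.2 ⟨hp, h⟩) q (Finset.mem_filter.2 ⟨hq, h'⟩) hpq
  · have h' : P q.1 := hpq ▸ h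
    simpa [h, h'] using hedge₁ p (Finset.mem_filter.2 ⟨hp, h⟩) q (Finset.mem_filter.2 ⟨hq, h'⟩) hpq
  · have h' : ¬P q.1 := hpq ▸ h
    simpa [h, h'] using hedge₀ p (Finset.mem_filter.2 ⟨hp, h⟩) q (Finset.mem_filter.2 ⟨hq, h'⟩) hpq

theorem image_mem_copiesP {f : Fin n × ℕ → Fin n × ℕ} {A B B' : Finset (Fin n × ℕ)}
    (hbij : Set.BijOn f ↑B ↑B') (hf : PreservesOn E f B) (hAB : A ⊆ B) :
    A.image f ∈ CopiesP E A B' := by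
  refine ⟨fun q hq => ?_, f, ?_, hf.mono hAB⟩
  · obtain ⟨p, hp, rfl⟩ := Finset.mem_image.1 hq
    exact hbij.mapsTo (hAB hp)
  · rw [Finset.coe_image]
    exact (hbij.injOn.mono (Finset.coe_subset.2 hAB)).bijOn_image

theorem exists_mem_copiesP_of_subset {A B B' C : Finset (Fin n × ℕ)}
    (hB' : B' ∈ CopiesP E B C) (hAB : A ⊆ B) : ∃ A', A' ∈ CopiesP E A B' := by
  obtain ⟨-, f, hbij, hf⟩ := hB'
  exact ⟨_, image_mem_copiesP hbij hf hAB⟩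

theorem copiesP_finite (E : ℕ → ℕ → Prop) (A C : Finset (Fin n × ℕ)) :
    (CopiesP E A C).Finite :=
  C.powerset.finite_toSet.subset fun _ hX => Finset.mem_coe.2 (Finset.mem_powerset.2 hX.1)

theorem IsoP.filter {A A' : Finset (Fin n × ℕ)} (h : IsoP E A A') (Q : Fin n → Prop)
    [DecidablePred Q] : IsoP E (A.filter fun p => Q p.1) (A'.filter fun p => Q p.1) := by
  obtain ⟨f, hbij, hf⟩ := isoP_iff.1 h
  have hA' : A' = A.image f := by
    rw [← Finset.coe_inj, Finset.coe_image, hbij.image_eq]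
  have himage : (A.filter fun p => Q p.1).image f = A'.filter fun p => Q p.1 := by
    rw [hA', Finset.filter_image]
    exact congrArg _ (Finset.filter_congr fun p hp => by rw [hf.1 p hp])
  rw [← himage]
  exact (image_mem_copiesP hbij hf (Finset.filter_subset _ A)).2

theorem IsoP.union {P : Fin n → Prop} [DecidablePred P] {B B₀ B₁ : Finset (Fin n × ℕ)}
    (h₀ : IsoP E (B.filter fun p => ¬P p.1) B₀) (h₁ : IsoP E (B.filter fun p => P p.1) B₁) :
    IsoP E B (B₀ ∪ B₁) := by
  obtain ⟨f₀, hbij₀, hf₀⟩ := isoP_iff.1 h₀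
  obtain ⟨f₁, hbij₁, hf₁⟩ := isoP_iff.1 h₁
  set g := fun p : Fin n × ℕ => if P p.1 then f₁ p else f₀ p
  have hg : PreservesOn E g B := hf₀.ite hf₁
  have hbij₀' : Set.BijOn g ↑(B.filter fun p => ¬P p.1) ↑B₀ :=
    hbij₀.congr fun p hp => by simp [g, (Finset.mem_filter.1 hp).2]
  have hbij₁' : Set.BijOn g ↑(B.filter fun p => P p.1) ↑B₁ :=
    hbij₁.congr fun p hp => by simp [g, (Finset.mem_filter.1 hp).2]
  have hB : ((B.filter fun p => ¬P p.1) ∪ B.filter fun p => P p.1) = B := by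
    rw [Finset.union_comm, Finset.filter_union_filter_not_eq]
  refine isoP_iff.2 ⟨g, ?_, hg⟩
  rw [← hB, Finset.coe_union, Finset.coe_union]
  refine hbij₀'.union hbij₁' fun p hp q hq hpq => ?_
  rw [← Finset.coe_union, hB] at hp hq
  have hpart : p.1 = q.1 := by rw [← hg.1 p hp, ← hg.1 q hq, hpq]
  by_cases h : P p.1
  · exact hbij₁'.injOn (Finset.mem_filter.2 ⟨hp, h⟩) (Finset.mem_filter.2 ⟨hq, hpart ▸ h⟩) hpq
  · exact hbij₀'.injOn (Finset.mem_filter.2 ⟨hp, h⟩) (Finset.mem_filter.2 ⟨hq, hpart ▸ h⟩) hpq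

theorem filter_mem_copiesP_of_mem_copiesP_union {Q : Fin n → Prop} [DecidablePred Q]
    {A X C₀ C₁ : Finset (Fin n × ℕ)} (hX : X ∈ CopiesP E A (C₀ ∪ C₁))
    (hC₀ : ∀ p ∈ C₀, ¬Q p.1) :
    (X.filter fun p => Q p.1) ∈ CopiesP E (A.filter fun p => Q p.1) C₁ := by
  refine ⟨fun p hp => ?_, hX.2.filter Q⟩
  obtain ⟨hpX, hpQ⟩ := Finset.mem_filter.1 hp
  exact (Finset.mem_union.1 (hX.1 hpX)).resolve_left fun h => hC₀ p h hpQ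

theorem ArrowP.exists_of_card_le {A B C : Finset (Fin n × ℕ)} {s : ℕ} (h : ArrowP E A B C s)
    {α : Type*} [Finite α] (hα : Nat.card α ≤ s) (χ : Finset (Fin n × ℕ) → α) :
    ∃ B' ∈ CopiesP E B C, ∀ A₁ ∈ CopiesP E A B', ∀ A₂ ∈ CopiesP E A B', χ A₁ = χ A₂ := by
  let ι : α ↪ Fin s := (Finite.equivFin α).toEmbedding.trans (Fin.castLEEmb hα)
  obtain ⟨B', hB', hconst⟩ := h (ι ∘ χ)
  exact ⟨B', hB', fun A₁ h₁ A₂ h₂ => ι.injective (hconst A₁ h₁ A₂ h₂)⟩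

end Copies

theorem arrowP_union {n : ℕ} (E : ℕ → ℕ → Prop) (r : ℕ) (P : Fin n → Prop) [DecidablePred P]
    {A B C0 C1 : Finset (Fin n × ℕ)} (hAB : A ⊆ B)
    (hC0 : ∀ p ∈ C0, ¬P p.1) (hC1 : ∀ p ∈ C1, P p.1)
    (h1 : ArrowP E (A.filter fun p => P p.1) (B.filter fun p => P p.1) C1
        (r ^ (CopiesP E (A.filter fun p => ¬P p.1) (B.filter fun p => ¬P p.1)).ncard))
    (h0 : ArrowP E (A.filter fun p => ¬P p.1) (B.filter fun p => ¬P p.1) C0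
        (r ^ (CopiesP E (A.filter fun p => P p.1) C1).ncard)) :
    ArrowP E A B (C0 ∪ C1) r := by
  intro χ
  set S := CopiesP E (A.filter fun p => P p.1) C1
  have : Finite S := (copiesP_finite E _ C1).to_subtype
  obtain ⟨B0', hB0', hconst0⟩ := h0.exists_of_card_le (α := S → Fin r)
    (by rw [Nat.card_fun, Nat.card_fin, Nat.card_coe_set_eq]) fun A' s => χ (A' ∪ s)
  obtain ⟨A0', hA0'⟩ := exists_mem_copiesP_of_subset hB0' (Finset.filter_subset_filter _ hAB)
  have hcopies_pos : (CopiesP E (A.filter fun p => ¬P p.1) (B.filter fun p => ¬P p.1)).ncard ≠ 0 :=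
    (Set.ncard_pos (copiesP_finite E _ _)).2
      ⟨_, Finset.filter_subset_filter _ hAB, isoP_refl _⟩ |>.ne'
  obtain ⟨B1', hB1', hconst1⟩ := h1.exists_of_card_le (by simpa using Nat.le_self_pow hcopies_pos r)
    fun A'' => χ (A0' ∪ A'')
  refine ⟨B0' ∪ B1', ⟨Finset.union_subset_union hB0'.1 hB1'.1, hB0'.2.union hB1'.2⟩, ?_⟩
  have hB0'part : ∀ p ∈ B0', ¬P p.1 := fun p hp => hC0 p (hB0'.1 hp)
  have hB1'part : ∀ p ∈ B1', ¬¬P p.1 := fun p hp => not_not_intro (hC1 p (hB1'.1 hp))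
  have hsplit : ∀ X ∈ CopiesP E A (B0' ∪ B1'), χ X = χ (A0' ∪ X.filter fun p => P p.1) := by
    intro X hX
    have hX0 := filter_mem_copiesP_of_mem_copiesP_union (Q := fun i => ¬P i)
      (Finset.union_comm B0' B1' ▸ hX) hB1'part
    have hX1 := filter_mem_copiesP_of_mem_copiesP_union hX hB0'part
    calc χ X = χ ((X.filter fun p => ¬P p.1) ∪ X.filter fun p => P p.1) := by
          rw [Finset.union_comm, Finset.filter_union_filter_not_eq]
      _ = χ (A0' ∪ X.filter fun p => P p.1) :=
          congrFun (hconst0 _ hX0 _ hA0') ⟨_, hX1.1.trans hB1'.1, hX1.2⟩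
  intro X₁ hX₁ X₂ hX₂
  rw [hsplit X₁ hX₁, hsplit X₂ hX₂]
  exact hconst1 _ (filter_mem_copiesP_of_mem_copiesP_union hX₁ hB0'part) _
    (filter_mem_copiesP_of_mem_copiesP_union hX₂ hB0'part)

theorem ramsey_InT_step_general (n : ℕ) (E : ℕ → ℕ → Prop) (r : ℕ)
    (A B C0 C1 : Finset (Fin (n + 1) × ℕ))
    (hAB : A ⊆ B)
    (hC0 : ∀ p ∈ C0, p.1 ≠ Fin.last n)
    (hC1 : ∀ p ∈ C1, p.1 = Fin.last n)
    (h1 : ArrowP E (A.filter fun p => p.1 = Fin.last n)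
        (B.filter fun p => p.1 = Fin.last n) C1
        (r ^ (CopiesP E (A.filter fun p => p.1 ≠ Fin.last n)
          (B.filter fun p => p.1 ≠ Fin.last n)).ncard))
    (h0 : ArrowP E (A.filter fun p => p.1 ≠ Fin.last n)
        (B.filter fun p => p.1 ≠ Fin.last n) C0
        (r ^ (CopiesP E (A.filter fun p => p.1 = Fin.last n) C1).ncard)) :
    ArrowP E A B (C0 ∪ C1) r :=
  arrowP_union E r (· = Fin.last n) hAB hC0 hC1 h1 h0

/-- Induction step for the Ramsey property of `I_n[T]*`: with `A ⊆ B` meeting all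
`n + 1` parts, `A⁰, B⁰` their restrictions to the first `n` parts and `A_{n}, B_{n}` the
restrictions to the last part, if
`C¹ → (B_n)^{A_n}_{r^{|copies of A⁰ in B⁰|}}` and
`C⁰ → (B⁰)^{A⁰}_{r^{|copies of A_n in C¹|}}`, then `C⁰ ⊔ C¹ → (B)^A_r`. -/
theorem ramsey_InT_step (n : ℕ) (E : ℕ → ℕ → Prop) (r : ℕ)
    (A B C0 C1 : Finset (Fin (n + 1) × ℕ))
    (hAB : A ⊆ B)
    (hAfull : ∀ i : Fin (n + 1), ∃ p ∈ A, p.1 = i)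
    (hBfull : ∀ i : Fin (n + 1), ∃ p ∈ B, p.1 = i)
    (hC0 : ∀ p ∈ C0, p.1 ≠ Fin.last n)
    (hC1 : ∀ p ∈ C1, p.1 = Fin.last n)
    (h1 : ArrowP E (A.filter fun p => p.1 = Fin.last n)
        (B.filter fun p => p.1 = Fin.last n) C1
        (r ^ (CopiesP E (A.filter fun p => p.1 ≠ Fin.last n)
          (B.filter fun p => p.1 ≠ Fin.last n)).ncard))
    (h0 : ArrowP E (A.filter fun p => p.1 ≠ Fin.last n)
        (B.filter fun p => p.1 ≠ Fin.last n) C0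
        (r ^ (CopiesP E (A.filter fun p => p.1 = Fin.last n) C1).ncard)) :
    ArrowP E A B (C0 ∪ C1) r :=
  ramsey_InT_step_general n E r A B C0 C1 hAB hC0 hC1 h1 h0
end

section
/- The class of finite substructures of I_ω[C₃]* has the Ramsey property: for all finite A ≤ B in the age of I_ω[C₃]* and all r ≥ 1, there exists a finite C in the age such that every r-coloring of copies of A in C is constant on the copies of A inside some copy of B. This follows from the classical Ramsey theorem via the isomorphism-characterization by collapses and position-sets. -/
/-!
A finite substructure `A` of `I_ω[C₃]*` is determined, up to isomorphism, by its position
pattern: replace each index by its `ord`-rank among the indices `I_A` that `A` uses. Hence a copy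
of `A` is determined by its index set, an `#I_A`-subset of `ℕ`, and a colouring of copies of `A`
is a colouring of `#I_A`-subsets of `ℕ`. The finite Ramsey theorem yields `n` and an
`#I_B`-subset `T` of `{0, …, n-1}` all of whose `#I_A`-subsets get one colour; the copy of `B` on
`T` then lies in `C = {0, …, n-1} × [3]`. The finite Ramsey theorem follows from the infinite one
by Rado's selection principle.
-/

/-- Isomorphism of finite substructures of `I_ω[C₃]*` (vertex set `ℕ × [3]`, edges
within cycles, level predicates, and an order convex w.r.t. levels restricting to the
dense order `ord` on indices in each level): a bijection preserving levels, the
partition into cycles, and the index order. -/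
def Iso3 (ord : ℕ → ℕ → Prop) (A B : Finset (ℕ × Fin 3)) : Prop :=
  ∃ g : ℕ × Fin 3 → ℕ × Fin 3, Set.BijOn g ↑A ↑B ∧
    (∀ p ∈ A, (g p).2 = p.2) ∧
    (∀ p ∈ A, ∀ q ∈ A, (p.1 = q.1 ↔ (g p).1 = (g q).1)) ∧
    (∀ p ∈ A, ∀ q ∈ A, (ord p.1 q.1 ↔ ord (g p).1 (g q).1))

open Finset

section Ramsey

variable {β : Type*}

def IsHomogeneous (χ : Finset ℕ → β) (k : ℕ) (T : Set ℕ) : Prop :=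
  ∃ c, ∀ s : Finset ℕ, ↑s ⊆ T → #s = k → χ s = c

theorem IsHomogeneous.mono {χ : Finset ℕ → β} {k : ℕ} {T T' : Set ℕ}
    (h : IsHomogeneous χ k T) (hT' : T' ⊆ T) : IsHomogeneous χ k T' :=
  h.imp fun _ hc s hs => hc s (hs.trans hT')

theorem exists_strictMono_color_insert_eq {k : ℕ}
    (ih : ∀ (χ : Finset ℕ → β) (S : Set ℕ), S.Infinite → ∃ T ⊆ S, T.Infinite ∧ IsHomogeneous χ k T)
    (χ : Finset ℕ → β) {S : Set ℕ} (hS : S.Infinite) :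
    ∃ a : ℕ → ℕ, StrictMono a ∧ Set.range a ⊆ S ∧ ∃ c : ℕ → β, ∀ j (s : Finset ℕ),
      ↑s ⊆ a '' Set.Ioi j → #s = k → χ (insert (a j) s) = c j := by
  have step (W : {W : Set ℕ // W.Infinite}) : ∃ W' : {W : Set ℕ // W.Infinite},
      W'.1 ⊆ W.1 \ Set.Iic (sInf W.1) ∧ ∃ c, ∀ s : Finset ℕ, ↑s ⊆ W'.1 → #s = k →
        χ (insert (sInf W.1) s) = c := by
    obtain ⟨T, hT, hTinf, hhom⟩ :=
      ih (fun s => χ (insert (sInf W.1) s)) _ (W.2.sdiff (Set.finite_Iic _))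
    exact ⟨⟨T, hTinf⟩, hT, hhom⟩
  choose F hF col hcol using step
  set seq : ℕ → {W : Set ℕ // W.Infinite} := fun n => F^[n] ⟨S, hS⟩
  have hseq (n : ℕ) : seq (n + 1) = F (seq n) := Function.iterate_succ_apply' F n _
  set a : ℕ → ℕ := fun n => sInf (seq n).1
  have ha_mem (n : ℕ) : a n ∈ (seq n).1 := Nat.sInf_mem (seq n).2.nonempty
  have hsucc (n : ℕ) : (seq (n + 1)).1 ⊆ (seq n).1 \ Set.Iic (a n) := hseq n ▸ hF (seq n)
  have hanti : Antitone fun n => (seq n).1 :=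
    antitone_nat_of_succ_le fun n => (hsucc n).trans Set.sdiff_subset
  refine ⟨a, strictMono_nat_of_lt_succ fun n => ?_, ?_, fun n => col (seq n), ?_⟩
  · simpa using ((hsucc n) (ha_mem (n + 1))).2
  · rintro _ ⟨n, rfl⟩
    exact hanti (Nat.zero_le n) (ha_mem n)
  · intro j s hs hk
    refine hcol (seq j) s (fun x hx => ?_) hk
    obtain ⟨i, hij, rfl⟩ := hs hx
    exact hseq j ▸ hanti (Nat.succ_le_of_lt hij) (ha_mem i)

theorem exists_infinite_isHomogeneous [Finite β] (k : ℕ) (χ : Finset ℕ → β) {S : Set ℕ}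
    (hS : S.Infinite) : ∃ T ⊆ S, T.Infinite ∧ IsHomogeneous χ k T := by
  induction k generalizing χ S with
  | zero => exact ⟨S, subset_rfl, hS, χ ∅, fun s _ hs => by rw [card_eq_zero.mp hs]⟩
  | succ k ih =>
    obtain ⟨a, ha, haS, c, hc⟩ := exists_strictMono_color_insert_eq (fun χ _ => ih χ) χ hS
    obtain ⟨c₀, hc₀⟩ := Finite.exists_infinite_fiber c
    refine ⟨a '' (c ⁻¹' {c₀}), (Set.image_subset_range _ _).trans haS,
      (Set.infinite_coe_iff.mp hc₀).image ha.injective.injOn, c₀, fun s hs hk => ?_⟩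
    have hne : s.Nonempty := card_pos.mp (by omega)
    obtain ⟨j, hj, hjmin⟩ := hs (s.min'_mem hne)
    have herase : ↑(s.erase (s.min' hne)) ⊆ a '' Set.Ioi j := by
      intro x hx
      obtain ⟨hxm, hxs⟩ := mem_erase.mp hx
      obtain ⟨i, -, rfl⟩ := hs hxs
      refine ⟨i, ha.lt_iff_lt.mp ?_, rfl⟩
      exact hjmin ▸ lt_of_le_of_ne (s.min'_le _ hxs) (Ne.symm hxm)
    have := hc j _ herase (by rw [card_erase_of_mem (s.min'_mem hne), hk]; rfl)
    rwa [hjmin, insert_erase (s.min'_mem hne), hj] at this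

theorem exists_isHomogeneous_subset_range [Finite β] (k m : ℕ) :
    ∃ n, ∀ χ : Finset ℕ → β, ∃ T ⊆ range n, #T = m ∧ IsHomogeneous χ k T := by
  by_contra! h
  choose χs hχs using h
  -- glue the bad colourings of all the `range n` into one colouring of all finite sets
  set bound : Finset (Finset ℕ) → ℕ := fun F => (F.biUnion id).sup id + 1
  obtain ⟨χ, hχ⟩ := Finset.rado_selection fun F => χs (bound F)
  obtain ⟨T₀, -, hT₀, hhom⟩ := exists_infinite_isHomogeneous k χ Set.infinite_univ
  obtain ⟨T, hTT₀, hT⟩ := hT₀.exists_subset_card_eq m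
  obtain ⟨F, hF, hagree⟩ := hχ T.powerset
  have hTF : T ⊆ range (bound F) := fun x hx => mem_range.mpr <| Nat.lt_succ_of_le <|
    le_sup (f := id) (mem_biUnion.mpr ⟨T, hF (mem_powerset_self T), hx⟩)
  obtain ⟨c, hc⟩ := hhom.mono hTT₀
  refine hχs (bound F) T hTF hT ⟨c, fun s hs hk => ?_⟩
  rw [← hagree s (mem_powerset.mpr (coe_subset.mp hs))]
  exact hc s hs hk

end Ramsey

section OrdRank

variable {α : Type*} (ord : α → α → Prop)

open Classical in
noncomputable def ordRank (s : Finset α) (a : α) : ℕ := #{x ∈ s | ord x a}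

def IsOrdEmbOn (f : α → α) (s : Finset α) : Prop :=
  ∀ a ∈ s, ∀ b ∈ s, ord a b ↔ ord (f a) (f b)

variable {ord} {s : Finset α} {a b : α}

theorem ordRank_lt_ordRank [IsStrictOrder α ord] (ha : a ∈ s) (hab : ord a b) :
    ordRank ord s a < ordRank ord s b := by
  classical
  have hsub : {x ∈ s | ord x a} ⊆ {x ∈ s | ord x b} :=
    monotone_filter_right _ fun _ _ hx => _root_.trans hx hab
  exact card_lt_card <| (ssubset_iff_of_subset hsub).mpr
    ⟨a, mem_filter.mpr ⟨ha, hab⟩, fun h => irrefl a (mem_filter.mp h).2⟩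

theorem ordRank_lt_card [Std.Irrefl ord] (ha : a ∈ s) : ordRank ord s a < #s := by
  classical
  exact card_lt_card <| ssubset_iff_of_subset (filter_subset _ _) |>.mpr
    ⟨a, ha, fun h => irrefl a (mem_filter.mp h).2⟩

theorem ordRank_lt_ordRank_iff [IsStrictTotalOrder α ord] (ha : a ∈ s) (hb : b ∈ s) :
    ordRank ord s a < ordRank ord s b ↔ ord a b := by
  refine ⟨fun h => ?_, ordRank_lt_ordRank ha⟩
  rcases trichotomous_of ord a b with hab | rfl | hba
  · exact hab
  · exact absurd h (lt_irrefl _)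
  · exact absurd h (ordRank_lt_ordRank hb hba).not_gt

theorem IsOrdEmbOn.injOn [IsStrictTotalOrder α ord] {f : α → α} (hf : IsOrdEmbOn ord f s) :
    Set.InjOn f s := by
  intro a ha b hb hfab
  rcases trichotomous_of ord a b with hab | rfl | hba
  · exact absurd ((hf a ha b hb).mp hab) (hfab ▸ irrefl _)
  · rfl
  · exact absurd ((hf b hb a ha).mp hba) (hfab ▸ irrefl _)

theorem ordRank_injOn [IsStrictTotalOrder α ord] (s : Finset α) : Set.InjOn (ordRank ord s) s :=
  fun a ha b hb hab => by
    rcases trichotomous_of ord a b with h | rfl | h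
    · exact absurd hab (ordRank_lt_ordRank ha h).ne
    · rfl
    · exact absurd hab (ordRank_lt_ordRank hb h).ne'

theorem ordRank_bijOn [IsStrictTotalOrder α ord] (s : Finset α) :
    Set.BijOn (ordRank ord s) s (range #s) := by
  classical
  have himage : s.image (ordRank ord s) = range #s :=
    eq_of_subset_of_card_le (image_subset_iff.mpr fun _ ha => mem_range.mpr (ordRank_lt_card ha))
      (by rw [card_range, card_image_of_injOn (ordRank_injOn s)])
  simpa [← himage] using (ordRank_injOn (ord := ord) s).bijOn_image

theorem IsOrdEmbOn.ordRank_image [IsStrictTotalOrder α ord] [DecidableEq α] {f : α → α}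
    (hf : IsOrdEmbOn ord f s) (ha : a ∈ s) : ordRank ord (s.image f) (f a) = ordRank ord s a := by
  classical
  have hfilter : {y ∈ s.image f | ord y (f a)} = {x ∈ s | ord x a}.image f := by
    ext y
    simp only [mem_filter, mem_image]
    constructor
    · rintro ⟨⟨x, hx, rfl⟩, hxa⟩
      exact ⟨x, ⟨hx, (hf x hx a ha).mpr hxa⟩, rfl⟩
    · rintro ⟨x, ⟨hx, hxa⟩, rfl⟩
      exact ⟨⟨x, hx, rfl⟩, (hf x hx a ha).mp hxa⟩
  rw [ordRank, ordRank, hfilter, card_image_of_injOn (hf.injOn.mono (filter_subset _ _))]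

end OrdRank

theorem Finset.image_fst_image_prodMap {α β γ δ : Type*} [DecidableEq α] [DecidableEq β]
    [DecidableEq (β × δ)] (A : Finset (α × γ)) (f : α → β) (g : γ → δ) :
    (A.image (Prod.map f g)).image Prod.fst = (A.image Prod.fst).image f := by
  simp only [image_image]
  rfl

section Pattern

variable (ord : ℕ → ℕ → Prop)

noncomputable def positionPattern (A : Finset (ℕ × Fin 3)) : Finset (ℕ × Fin 3) :=
  A.image fun p => (ordRank ord (A.image Prod.fst) p.1, p.2)

noncomputable def copyOnIndices (P : Finset (ℕ × Fin 3)) (u : Finset ℕ) :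
    Finset (ℕ × Fin 3) :=
  {q ∈ u ×ˢ univ | (ordRank ord u q.1, q.2) ∈ P}

variable {ord}

theorem Iso3.exists_isOrdEmbOn {A A' : Finset (ℕ × Fin 3)} (h : Iso3 ord A A') :
    ∃ f : ℕ → ℕ, IsOrdEmbOn ord f (A.image Prod.fst) ∧ A' = A.image (Prod.map f id) := by
  obtain ⟨g, hbij, hlev, hidx, hord⟩ := h
  set f : ℕ → ℕ := fun i => (g (Function.invFunOn Prod.fst A i)).1
  have hf (p : ℕ × Fin 3) (hp : p ∈ A) : (g p).1 = f p.1 := by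
    obtain ⟨hmem, hfst⟩ := Function.invFunOn_pos (f := Prod.fst) ⟨p, hp, rfl⟩
    exact (hidx p hp _ hmem).mp hfst.symm
  refine ⟨f, fun i hi j hj => ?_, ?_⟩
  · obtain ⟨p, hp, rfl⟩ := mem_image.mp hi
    obtain ⟨q, hq, rfl⟩ := mem_image.mp hj
    rw [← hf p hp, ← hf q hq]
    exact hord p hp q hq
  · apply coe_injective
    rw [coe_image, ← hbij.image_eq]
    exact Set.image_congr fun p hp => Prod.ext (hf p hp) (hlev p hp)

variable [IsStrictTotalOrder ℕ ord]

theorem copyOnIndices_positionPattern (A : Finset (ℕ × Fin 3)) :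
    copyOnIndices ord (positionPattern ord A) (A.image Prod.fst) = A := by
  ext ⟨i, j⟩
  rw [copyOnIndices, mem_filter, mem_product]
  simp only [mem_univ, and_true]
  constructor
  · rintro ⟨hi, hij⟩
    obtain ⟨p, hp, hpij⟩ := mem_image.mp hij
    obtain ⟨hrank, rfl⟩ := Prod.mk.inj hpij
    rwa [← ordRank_injOn _ (mem_image_of_mem Prod.fst hp) hi hrank]
  · intro h
    exact ⟨mem_image_of_mem Prod.fst h, mem_image_of_mem _ h⟩

theorem positionPattern_image_prodMap {f : ℕ → ℕ} {A : Finset (ℕ × Fin 3)}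
    (hf : IsOrdEmbOn ord f (A.image Prod.fst)) :
    positionPattern ord (A.image (Prod.map f id)) = positionPattern ord A := by
  rw [positionPattern, positionPattern, image_fst_image_prodMap, image_image]
  refine image_congr fun p hp => ?_
  simp only [Function.comp_apply, Prod.map_fst, Prod.map_snd, id_eq,
    hf.ordRank_image (mem_image_of_mem Prod.fst hp)]

theorem iso3_image_prodMap {f : ℕ → ℕ} {A : Finset (ℕ × Fin 3)}
    (hf : IsOrdEmbOn ord f (A.image Prod.fst)) : Iso3 ord A (A.image (Prod.map f id)) := by
  have hinj : ∀ p ∈ A, ∀ q ∈ A, p.1 = q.1 ↔ f p.1 = f q.1 := fun p hp q hq =>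
    ⟨congrArg f, fun h => hf.injOn (mem_image_of_mem _ hp) (mem_image_of_mem _ hq) h⟩
  refine ⟨Prod.map f id, ?_, fun _ _ => rfl, hinj, fun p hp q hq =>
    hf _ (mem_image_of_mem _ hp) _ (mem_image_of_mem _ hq)⟩
  rw [coe_image]
  exact Set.InjOn.bijOn_image fun p hp q hq h =>
    Prod.ext ((hinj p hp q hq).mpr (Prod.ext_iff.mp h).1) (Prod.ext_iff.mp h).2

theorem Iso3.positionPattern_eq {A A' : Finset (ℕ × Fin 3)} (h : Iso3 ord A A') :
    positionPattern ord A' = positionPattern ord A := by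
  obtain ⟨f, hf, rfl⟩ := h.exists_isOrdEmbOn
  exact positionPattern_image_prodMap hf

theorem Iso3.card_image_fst {A A' : Finset (ℕ × Fin 3)} (h : Iso3 ord A A') :
    #(A'.image Prod.fst) = #(A.image Prod.fst) := by
  obtain ⟨f, hf, rfl⟩ := h.exists_isOrdEmbOn
  rw [image_fst_image_prodMap, card_image_of_injOn hf.injOn]

theorem Iso3.eq_copyOnIndices {A A' : Finset (ℕ × Fin 3)} (h : Iso3 ord A A') :
    A' = copyOnIndices ord (positionPattern ord A) (A'.image Prod.fst) := by
  rw [← h.positionPattern_eq, copyOnIndices_positionPattern]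

theorem iso3_copyOnIndices {B : Finset (ℕ × Fin 3)} {u : Finset ℕ}
    (hu : #u = #(B.image Prod.fst)) : Iso3 ord B (copyOnIndices ord (positionPattern ord B) u) := by
  set I := B.image Prod.fst
  -- the `ord`-increasing bijection `I → u` sends the element of rank `k` to the one of rank `k`
  set m : ℕ → ℕ := Function.invFunOn (ordRank ord u) u ∘ ordRank ord I
  have hsurj := (ordRank_bijOn (ord := ord) u).surjOn
  have hrank : Set.MapsTo (ordRank ord I) I (range #u) := hu ▸ (ordRank_bijOn I).mapsTo
  have hm_mem (i : ℕ) (hi : i ∈ I) : m i ∈ u := hsurj.mapsTo_invFunOn (hrank hi)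
  have hm_rank (i : ℕ) (hi : i ∈ I) : ordRank ord u (m i) = ordRank ord I i :=
    hsurj.rightInvOn_invFunOn (hrank hi)
  have hm : IsOrdEmbOn ord m I := fun i hi j hj => by
    rw [← ordRank_lt_ordRank_iff (ord := ord) hi hj, ← hm_rank i hi, ← hm_rank j hj,
      ordRank_lt_ordRank_iff (hm_mem i hi) (hm_mem j hj)]
  have hmI : (B.image (Prod.map m id)).image Prod.fst = u := by
    rw [image_fst_image_prodMap]
    exact eq_of_subset_of_card_le (image_subset_iff.mpr hm_mem)
      (by rw [card_image_of_injOn hm.injOn, hu])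
  rw [← positionPattern_image_prodMap hm, ← hmI, copyOnIndices_positionPattern]
  exact iso3_image_prodMap hm

end Pattern

theorem ramsey_IomegaC3_general (ord : ℕ → ℕ → Prop)
    (hord : IsStrictTotalOrder ℕ ord)
    (r : ℕ) (A B : Finset (ℕ × Fin 3)) :
    ∃ C : Finset (ℕ × Fin 3), ∀ χ : Finset (ℕ × Fin 3) → Fin r,
      ∃ B' : Finset (ℕ × Fin 3), B' ⊆ C ∧ Iso3 ord B B' ∧
        ∀ A₁ A₂ : Finset (ℕ × Fin 3), A₁ ⊆ B' → A₂ ⊆ B' →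
          Iso3 ord A A₁ → Iso3 ord A A₂ → χ A₁ = χ A₂ := by
  obtain ⟨n, hn⟩ :=
    exists_isHomogeneous_subset_range (β := Fin r) #(A.image Prod.fst) #(B.image Prod.fst)
  refine ⟨range n ×ˢ univ, fun χ => ?_⟩
  obtain ⟨T, hTn, hT, c, hc⟩ := hn fun u => χ (copyOnIndices ord (positionPattern ord A) u)
  set B' := copyOnIndices ord (positionPattern ord B) T
  have hB'T : B' ⊆ T ×ˢ univ := filter_subset _ _
  have hcopy (A' : Finset (ℕ × Fin 3)) (hA' : A' ⊆ B') (hiso : Iso3 ord A A') : χ A' = c := by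
    have hA'T : ↑(A'.image Prod.fst) ⊆ (T : Set ℕ) := by
      rw [coe_subset, image_subset_iff]
      exact fun p hp => (mem_product.mp (hB'T (hA' hp))).1
    rw [hiso.eq_copyOnIndices]
    exact hc _ hA'T hiso.card_image_fst
  refine ⟨B', hB'T.trans (product_subset_product_left hTn), iso3_copyOnIndices hT,
    fun A₁ A₂ h₁ h₂ hi₁ hi₂ => (hcopy A₁ h₁ hi₁).trans (hcopy A₂ h₂ hi₂).symm⟩

/-- Theorem (`IomegaFinT-RP`): the age of `I_ω[C₃]*` has the Ramsey property. -/
theorem ramsey_IomegaC3 (ord : ℕ → ℕ → Prop)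
    (hord : IsStrictTotalOrder ℕ ord)
    (hdense : ∀ a b, ord a b → ∃ c, ord a c ∧ ord c b)
    (hnomax : ∀ a, ∃ b, ord a b) (hnomin : ∀ a, ∃ b, ord b a)
    (r : ℕ) (hr : 1 ≤ r) (A B : Finset (ℕ × Fin 3))
    (hAB : ∃ A₀, A₀ ⊆ B ∧ Iso3 ord A A₀) :
    ∃ C : Finset (ℕ × Fin 3), ∀ χ : Finset (ℕ × Fin 3) → Fin r,
      ∃ B' : Finset (ℕ × Fin 3), B' ⊆ C ∧ Iso3 ord B B' ∧
        ∀ A₁ A₂ : Finset (ℕ × Fin 3), A₁ ⊆ B' → A₂ ⊆ B' →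
          Iso3 ord A A₁ → Iso3 ord A A₂ → χ A₁ = χ A₂ :=
  ramsey_IomegaC3_general ord hord r A B
end

section
/- The canonical semigeneric structure S[n,k] satisfies the parity constraint: for any two distinct parts, any distinct u, v in one part, and any distinct x, y in the other part, the number of edges directed from {u,v} to {x,y} is even. This follows by summing, over all transversal pairs of {u,v,x,y}, the parity equations obtained by completing each pair with the imaginary transversal points t, t': every term involving t or t' appears an even number of times and cancels modulo 2. -/
/-!
Modulo 2 an edge between distinct parts `i ≠ i'` decomposes as
`E(u, x) = a(u, i') + b(x, i) + c(i, i')`, with one term depending only on the tail and the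
head's part, one only on the head and the tail's part, and one only on the two parts. In the
four-term sum over `{u, v} × {x, y}` every such term occurs exactly twice, so the sum vanishes.
-/

/-- The vertex set of the canonical semigeneric structure `S[n,k]`: triples `(i, f, j)`
with `i < k`, `f : [k]∖{i} → [2]` (normalised by `f i = 0`), `j < n`. -/
def SV (n k : ℕ) := {v : Fin k × (Fin k → Fin 2) × Fin n // v.2.1 v.1 = 0}

/-- The edge relation of `S[n,k]`, defined via the imaginary transversal `{tᵢ}`:
`t_{i'} → tᵢ` iff `i' < i`, `t_{i'} → (i,f,j)` iff `f i' = 0`, and between vertices in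
distinct parts the unique orientation making the number of edges from
`{(i,f,j), tᵢ}` to `{(i',f',j'), t_{i'}}` even. -/
def SE {n k : ℕ} (u x : SV n k) : Prop :=
  u.val.1 ≠ x.val.1 ∧
    ((if u.val.2.1 x.val.1 = 1 then 1 else 0) +
     (if x.val.2.1 u.val.1 = 0 then 1 else 0) +
     (if u.val.1 < x.val.1 then 1 else 0)) % 2 = 1

instance {n k : ℕ} (u x : SV n k) : Decidable (SE u x) := by
  unfold SE; infer_instance

theorem add_add_add_eq_zero_of_eq_add_add {R V P : Type*} [CommRing R] [CharP R 2]
    (part : V → P) (E : V → V → R) (a b : V → P → R) (c : P → P → R)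
    (hE : ∀ u x, part u ≠ part x → E u x = a u (part x) + b x (part u) + c (part u) (part x))
    {u v x y : V} (huv : part u = part v) (hxy : part x = part y) (hux : part u ≠ part x) :
    E u x + E u y + E v x + E v y = 0 := by
  rw [hE u x hux, hE u y (hxy ▸ hux), hE v x (huv ▸ hux), hE v y (huv ▸ hxy ▸ hux), ← huv,
    ← hxy]
  calc _ = 2 * (a u (part x) + a v (part x) + b x (part u) + b y (part u)
            + 2 * c (part u) (part x)) := by ring
    _ = 0 := by rw [CharTwo.two_eq_zero, zero_mul]

theorem SE_indicator_cast_eq {n k : ℕ} (u x : SV n k) (hux : u.val.1 ≠ x.val.1) :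
    ((if SE u x then 1 else 0 : ℕ) : ZMod 2) =
      ((u.val.2.1 x.val.1 : ℕ) : ZMod 2) + (((x.val.2.1 u.val.1 : ℕ) : ZMod 2) + 1) +
        (if u.val.1 < x.val.1 then 1 else 0) := by
  have fin_two : ∀ s : Fin 2, s = 0 ∨ s = 1 := by decide
  rcases fin_two (u.val.2.1 x.val.1) with hs | hs <;>
    rcases fin_two (x.val.2.1 u.val.1) with ht | ht <;>
    by_cases hlt : u.val.1 < x.val.1 <;> simp [SE, hux, hs, ht, hlt] <;> decide

/-- `S[n,k]` satisfies the semigeneric parity constraint: for distinct `u, v` in one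
part and distinct `x, y` in another part, the number of edges directed from `{u,v}` to
`{x,y}` is even. -/
theorem Snk_parity (n k : ℕ) :
    ∀ u v x y : SV n k,
      u.val.1 = v.val.1 → x.val.1 = y.val.1 → u.val.1 ≠ x.val.1 →
      u ≠ v → x ≠ y →
      ((if SE u x then 1 else 0) + (if SE u y then 1 else 0) +
       (if SE v x then 1 else 0) + (if SE v y then 1 else 0)) % 2 = 0 := by
  intro u v x y huv hxy hux _ _
  rw [← Nat.dvd_iff_mod_eq_zero, ← ZMod.natCast_eq_zero_iff, Nat.cast_add, Nat.cast_add,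
    Nat.cast_add]
  exact add_add_add_eq_zero_of_eq_add_add (fun w : SV n k => w.val.1)
    (fun w z => ((if SE w z then 1 else 0 : ℕ) : ZMod 2))
    (fun w i => ((w.val.2.1 i : ℕ) : ZMod 2)) (fun z i => ((z.val.2.1 i : ℕ) : ZMod 2) + 1)
    (fun i i' => if i < i' then 1 else 0) SE_indicator_cast_eq huv hxy hux
end
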